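/- arXiv:math/0412015 — 8 statements merged into one kernel-verified Lean document; each statement's English description precedes it below -/
import Mathlib

section
/- For all positive integers m and n, the identity \(\sum_{a=1}^{m}\sum_{b=1}^{n}\binom{m+n-a+b-1}{m-a}\binom{m+n+a-b-1}{n-b}=\frac{mn}{2(m+n)}\binom{m+n}{m}^2\) holds (as an identity of rational numbers). -/
open Finset

lemma hs_conv (q : ℕ) : ∀ p R : ℕ,
    ∑ u ∈ Finset.range (R+1), Nat.choose (p+u) u * Nat.choose (q+(R-u)) (R-u)
      = Nat.choose (p+q+R+1) R := by
  intro p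
  induction p with
  | zero =>
    intro R
    have h1 : ∀ u ∈ Finset.range (R+1),
        Nat.choose (0+u) u * Nat.choose (q+(R-u)) (R-u) = Nat.choose (q+(R-u)) (R-u) := by
      intro u _; simp
    rw [Finset.sum_congr rfl h1]
    have h2 : ∑ u ∈ Finset.range (R+1), Nat.choose (q+(R-u)) (R-u)
        = ∑ u ∈ Finset.range (R+1), Nat.choose (q+u) u := by
      have := Finset.sum_range_reflect (fun u => Nat.choose (q+u) u) (R+1)
      simpa using this
    rw [h2]
    have h3 : ∀ u ∈ Finset.range (R+1), Nat.choose (q+u) u = Nat.choose (q+u) q := by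
      intro u _
      rw [show Nat.choose (q+u) u = Nat.choose (q+u) ((q+u)-q) from by congr 1; omega]
      exact Nat.choose_symm (by omega)
    rw [Finset.sum_congr rfl h3]
    have h4 : ∑ u ∈ Finset.range (R+1), Nat.choose (q+u) q
        = ∑ a ∈ Finset.Ico q (q+(R+1)), Nat.choose a q := by
      rw [Finset.sum_Ico_eq_sum_range]
      simp
    rw [h4, show q+(R+1) = (q+R)+1 from by omega, Finset.Ico_add_one_right_eq_Icc,
      Nat.sum_Icc_choose]
    rw [show Nat.choose (q+R+1) (q+1) = Nat.choose (q+R+1) ((q+R+1)-(q+1)) from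
      (Nat.choose_symm (by omega)).symm]
    congr 1 <;> omega
  | succ p ih =>
    intro R
    induction R with
    | zero => simp
    | succ R ihR =>
      have hsplit : ∀ p' : ℕ, ∑ u ∈ Finset.range (R+1+1),
            Nat.choose (p'+u) u * Nat.choose (q+(R+1-u)) (R+1-u)
          = (∑ i ∈ Finset.range (R+1),
              Nat.choose (p'+(i+1)) (i+1) * Nat.choose (q+(R-i)) (R-i))
            + Nat.choose (q+(R+1)) (R+1) := by
        intro p'
        rw [Finset.sum_range_succ']
        simp [Nat.succ_sub_succ]
      have hkey : ∀ i ∈ Finset.range (R+1),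
          Nat.choose (p+1+(i+1)) (i+1) * Nat.choose (q+(R-i)) (R-i)
          = Nat.choose (p+1+i) i * Nat.choose (q+(R-i)) (R-i)
            + Nat.choose (p+(i+1)) (i+1) * Nat.choose (q+(R-i)) (R-i) := by
        intro i _
        rw [show p+1+(i+1) = (p+1+i)+1 from by omega, Nat.choose_succ_succ (p+1+i) i,
          Nat.add_mul]
        congr 3
        omega
      rw [hsplit (p+1), Finset.sum_congr rfl hkey, Finset.sum_add_distrib, ihR]
      have h2 := ih (R+1)
      rw [hsplit p] at h2
      have pas : Nat.choose (p+1+q+(R+1)+1) (R+1)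
          = Nat.choose (p+q+R+2) R + Nat.choose (p+q+R+2) (R+1) := by
        rw [show p+1+q+(R+1)+1 = (p+q+R+2)+1 from by omega]
        exact Nat.choose_succ_succ _ _
      have e3 : Nat.choose (p+1+q+R+1) R = Nat.choose (p+q+R+2) R := by
        rw [show p+1+q+R+1 = p+q+R+2 from by omega]
      have e4 : Nat.choose (p+q+(R+1)+1) (R+1) = Nat.choose (p+q+R+2) (R+1) := by
        rw [show p+q+(R+1)+1 = p+q+R+2 from by omega]
      omega

lemma colsum (p D z : ℕ) :
    ∑ u ∈ Finset.range (D+1), Nat.choose (p+u) u * Nat.choose (D-u) z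
      = if z ≤ D then Nat.choose (p+D+1) (D-z) else 0 := by
  by_cases hz : z ≤ D
  · rw [if_pos hz]
    have hsub : Finset.range ((D-z)+1) ⊆ Finset.range (D+1) :=
      Finset.range_subset_range.mpr (by omega)
    have hvan : ∀ u ∈ Finset.range (D+1), u ∉ Finset.range ((D-z)+1) →
        Nat.choose (p+u) u * Nat.choose (D-u) z = 0 := by
      intro u hu hnu
      have h1 := Finset.mem_range.mp hu
      have h2 : ¬ (u < D-z+1) := fun h => hnu (Finset.mem_range.mpr h)
      rw [Nat.choose_eq_zero_of_lt (by omega : D-u < z), Nat.mul_zero]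
    rw [← Finset.sum_subset hsub hvan]
    have hcong : ∀ u ∈ Finset.range ((D-z)+1),
        Nat.choose (p+u) u * Nat.choose (D-u) z
        = Nat.choose (p+u) u * Nat.choose (z+((D-z)-u)) ((D-z)-u) := by
      intro u hu
      have h1 := Finset.mem_range.mp hu
      congr 1
      rw [show D-u = z+((D-z)-u) from by omega,
        ← Nat.choose_symm (Nat.le_add_right z ((D-z)-u)), Nat.add_sub_cancel_left]
    rw [Finset.sum_congr rfl hcong, hs_conv z p (D-z)]
    rw [show p+z+(D-z)+1 = p+D+1 from by omega]
  · rw [if_neg hz]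
    apply Finset.sum_eq_zero
    intro u hu
    rw [Nat.choose_eq_zero_of_lt (by omega : D-u < z), Nat.mul_zero]

lemma inner_u (M N x z : ℕ) (hx : x ≤ M) :
    ∑ u ∈ Finset.range (M+1-x), Nat.choose (N+1+(x+u)) u * Nat.choose (M-(x+u)) z
      = if x + z ≤ M then Nat.choose (M+N+2) (M-(x+z)) else 0 := by
  have hcong : ∀ u ∈ Finset.range (M+1-x),
      Nat.choose (N+1+(x+u)) u * Nat.choose (M-(x+u)) z
      = Nat.choose ((N+1+x)+u) u * Nat.choose ((M-x)-u) z := by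
    intro u _
    rw [show N+1+(x+u) = (N+1+x)+u from by omega, show M-(x+u) = (M-x)-u from by omega]
  rw [Finset.sum_congr rfl hcong, show M+1-x = (M-x)+1 from by omega,
    colsum (N+1+x) (M-x) z]
  by_cases h : x+z ≤ M
  · rw [if_pos (by omega : z ≤ M-x), if_pos h,
      show N+1+x+(M-x)+1 = M+N+2 from by omega, show (M-x)-z = M-(x+z) from by omega]
  · rw [if_neg (by omega : ¬ z ≤ M-x), if_neg h]

lemma inner_v (M N x z : ℕ) (hz : z ≤ N) :
    ∑ v ∈ Finset.range (N+1-z), Nat.choose (M+1+(z+v)) v * Nat.choose (N-(z+v)) x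
      = if x + z ≤ N then Nat.choose (M+N+2) (N-(x+z)) else 0 := by
  have hcong : ∀ v ∈ Finset.range (N+1-z),
      Nat.choose (M+1+(z+v)) v * Nat.choose (N-(z+v)) x
      = Nat.choose ((M+1+z)+v) v * Nat.choose ((N-z)-v) x := by
    intro v _
    rw [show M+1+(z+v) = (M+1+z)+v from by omega, show N-(z+v) = (N-z)-v from by omega]
  rw [Finset.sum_congr rfl hcong, show N+1-z = (N-z)+1 from by omega,
    colsum (M+1+z) (N-z) x]
  by_cases h : x+z ≤ N
  · rw [if_pos (by omega : x ≤ N-z), if_pos h,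
      show M+1+z+(N-z)+1 = M+N+2 from by omega, show (N-z)-x = N-(x+z) from by omega]
  · rw [if_neg (by omega : ¬ x ≤ N-z), if_neg h]

lemma count_lemma (M N : ℕ) (g : ℕ → ℕ) :
    (∑ x ∈ Finset.range (M+1), ∑ z ∈ Finset.range (N+1),
        (if x+z ≤ M ∧ x+z ≤ N then g (x+z) else 0))
    = ∑ t ∈ Finset.range (min M N + 1), (t+1) * g t := by
  set L := min M N with hL
  have hstep1 : ∀ x ∈ Finset.range (M+1),
      (∑ z ∈ Finset.range (N+1), (if x+z ≤ M ∧ x+z ≤ N then g (x+z) else 0))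
      = ∑ w ∈ Finset.Ico x (L+1), g w := by
    intro x hx
    have hx' := Finset.mem_range.mp hx
    have e1 : (∑ z ∈ Finset.range (N+1), (if x+z ≤ M ∧ x+z ≤ N then g (x+z) else 0))
        = ∑ w ∈ Finset.Ico x (x+(N+1)), (if w ≤ L then g w else 0) := by
      rw [Finset.sum_Ico_eq_sum_range, show x+(N+1)-x = N+1 from by omega]
      refine Finset.sum_congr rfl (fun z _ => ?_)
      refine if_congr ?_ rfl rfl
      omega
    rw [e1]
    have hsub : Finset.Ico x (L+1) ⊆ Finset.Ico x (x+(N+1)) := by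
      intro w hw
      have := Finset.mem_Ico.mp hw
      exact Finset.mem_Ico.mpr (by omega)
    have hvan : ∀ w ∈ Finset.Ico x (x+(N+1)), w ∉ Finset.Ico x (L+1) →
        (if w ≤ L then g w else 0) = 0 := by
      intro w hw hnw
      have h1 := Finset.mem_Ico.mp hw
      have h2 : ¬ (x ≤ w ∧ w < L+1) := fun h => hnw (Finset.mem_Ico.mpr h)
      rw [if_neg (by omega)]
    rw [← Finset.sum_subset hsub hvan]
    refine Finset.sum_congr rfl (fun w hw => ?_)
    have := Finset.mem_Ico.mp hw
    rw [if_pos (by omega)]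
  rw [Finset.sum_congr rfl hstep1]
  have hsub2 : Finset.range (L+1) ⊆ Finset.range (M+1) :=
    Finset.range_subset_range.mpr (by omega)
  have hvan2 : ∀ x ∈ Finset.range (M+1), x ∉ Finset.range (L+1) →
      (∑ w ∈ Finset.Ico x (L+1), g w) = 0 := by
    intro x hx hnx
    have h1 := Finset.mem_range.mp hx
    have h2 : ¬ (x < L+1) := fun h => hnx (Finset.mem_range.mpr h)
    rw [Finset.Ico_eq_empty (by omega), Finset.sum_empty]
  rw [← Finset.sum_subset hsub2 hvan2]
  rw [Finset.range_eq_Ico, Finset.sum_Ico_Ico_comm]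
  refine Finset.sum_congr rfl (fun w hw => ?_)
  rw [Finset.sum_const, Nat.card_Ico, smul_eq_mul, show w+1-0 = w+1 from by omega]

lemma tri_swap {α : Type*} [AddCommMonoid α] (n : ℕ) (F : ℕ → ℕ → α) :
    ∑ i ∈ Finset.range (n+1), ∑ x ∈ Finset.range (i+1), F i x
    = ∑ x ∈ Finset.range (n+1), ∑ i ∈ Finset.Ico x (n+1), F i x := by
  simp only [Finset.range_eq_Ico]
  exact (Finset.sum_Ico_Ico_comm 0 (n+1) fun x i => F i x).symm

lemma lemA (M N : ℕ) :
    (∑ i ∈ Finset.range (M+1), ∑ j ∈ Finset.range (N+1),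
        Nat.choose ((N-j)+(N+1+i)) i * Nat.choose ((M-i)+(M+1+j)) j)
    = ∑ t ∈ Finset.range (min M N + 1),
        (t+1) * (Nat.choose (M+N+2) (M-t) * Nat.choose (M+N+2) (N-t)) := by
  calc
    (∑ i ∈ Finset.range (M+1), ∑ j ∈ Finset.range (N+1),
        Nat.choose ((N-j)+(N+1+i)) i * Nat.choose ((M-i)+(M+1+j)) j)
        = ∑ i ∈ Finset.range (M+1), ∑ j ∈ Finset.range (N+1),
            ∑ x ∈ Finset.range (i+1), ∑ z ∈ Finset.range (j+1),
              (Nat.choose (N-j) x * Nat.choose (N+1+i) (i-x))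
                * (Nat.choose (M-i) z * Nat.choose (M+1+j) (j-z)) := by
      refine Finset.sum_congr rfl (fun i _ => Finset.sum_congr rfl (fun j _ => ?_))
      rw [Nat.add_choose_eq, Nat.add_choose_eq,
        Finset.Nat.sum_antidiagonal_eq_sum_range_succ_mk,
        Finset.Nat.sum_antidiagonal_eq_sum_range_succ_mk, Finset.sum_mul_sum]
    _ = ∑ i ∈ Finset.range (M+1), ∑ x ∈ Finset.range (i+1),
          ∑ j ∈ Finset.range (N+1), ∑ z ∈ Finset.range (j+1),
              (Nat.choose (N-j) x * Nat.choose (N+1+i) (i-x))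
                * (Nat.choose (M-i) z * Nat.choose (M+1+j) (j-z)) :=
      Finset.sum_congr rfl (fun i _ => Finset.sum_comm)
    _ = ∑ x ∈ Finset.range (M+1), ∑ i ∈ Finset.Ico x (M+1),
          ∑ j ∈ Finset.range (N+1), ∑ z ∈ Finset.range (j+1),
              (Nat.choose (N-j) x * Nat.choose (N+1+i) (i-x))
                * (Nat.choose (M-i) z * Nat.choose (M+1+j) (j-z)) :=
      tri_swap M _
    _ = ∑ x ∈ Finset.range (M+1), ∑ u ∈ Finset.range (M+1-x),
          ∑ j ∈ Finset.range (N+1), ∑ z ∈ Finset.range (j+1),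
              (Nat.choose (N-j) x * Nat.choose (N+1+(x+u)) ((x+u)-x))
                * (Nat.choose (M-(x+u)) z * Nat.choose (M+1+j) (j-z)) :=
      Finset.sum_congr rfl (fun x _ => Finset.sum_Ico_eq_sum_range _ _ _)
    _ = ∑ x ∈ Finset.range (M+1), ∑ u ∈ Finset.range (M+1-x),
          ∑ z ∈ Finset.range (N+1), ∑ v ∈ Finset.range (N+1-z),
              (Nat.choose (N-(z+v)) x * Nat.choose (N+1+(x+u)) ((x+u)-x))
                * (Nat.choose (M-(x+u)) z * Nat.choose (M+1+(z+v)) ((z+v)-z)) := by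
      refine Finset.sum_congr rfl (fun x _ => Finset.sum_congr rfl (fun u _ => ?_))
      rw [tri_swap N _]
      exact Finset.sum_congr rfl (fun z _ => Finset.sum_Ico_eq_sum_range _ _ _)
    _ = ∑ x ∈ Finset.range (M+1), ∑ z ∈ Finset.range (N+1),
          ∑ u ∈ Finset.range (M+1-x), ∑ v ∈ Finset.range (N+1-z),
              (Nat.choose (N-(z+v)) x * Nat.choose (N+1+(x+u)) ((x+u)-x))
                * (Nat.choose (M-(x+u)) z * Nat.choose (M+1+(z+v)) ((z+v)-z)) :=
      Finset.sum_congr rfl (fun x _ => Finset.sum_comm)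
    _ = ∑ x ∈ Finset.range (M+1), ∑ z ∈ Finset.range (N+1),
          (∑ u ∈ Finset.range (M+1-x),
              Nat.choose (N+1+(x+u)) u * Nat.choose (M-(x+u)) z)
          * (∑ v ∈ Finset.range (N+1-z),
              Nat.choose (M+1+(z+v)) v * Nat.choose (N-(z+v)) x) := by
      refine Finset.sum_congr rfl (fun x _ => Finset.sum_congr rfl (fun z _ => ?_))
      rw [Finset.sum_mul_sum]
      refine Finset.sum_congr rfl (fun u _ => Finset.sum_congr rfl (fun v _ => ?_))
      simp only [Nat.add_sub_cancel_left]
      ring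
    _ = ∑ x ∈ Finset.range (M+1), ∑ z ∈ Finset.range (N+1),
          (if x+z ≤ M ∧ x+z ≤ N
            then Nat.choose (M+N+2) (M-(x+z)) * Nat.choose (M+N+2) (N-(x+z)) else 0) := by
      refine Finset.sum_congr rfl (fun x hx => Finset.sum_congr rfl (fun z hz => ?_))
      have hx' : x ≤ M := by have := Finset.mem_range.mp hx; omega
      have hz' : z ≤ N := by have := Finset.mem_range.mp hz; omega
      rw [inner_u M N x z hx', inner_v M N x z hz']
      by_cases h1 : x+z ≤ M <;> by_cases h2 : x+z ≤ N <;> simp [h1, h2]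
    _ = ∑ t ∈ Finset.range (min M N + 1),
        (t+1) * (Nat.choose (M+N+2) (M-t) * Nat.choose (M+N+2) (N-t)) :=
      count_lemma M N (fun t => Nat.choose (M+N+2) (M-t) * Nat.choose (M+N+2) (N-t))

lemma lemB (M N : ℕ) :
    (∑ t ∈ Finset.range (min M N + 1),
        ((t:ℚ)+1) * (Nat.choose (M+N+2) (M-t) : ℚ) * (Nat.choose (M+N+2) (N-t) : ℚ))
    = ((M:ℚ)+1) * ((N:ℚ)+1) * (Nat.choose (M+N+2) (M+1) : ℚ)
        * (Nat.choose (M+N+2) (N+1) : ℚ) / (2*((M:ℚ)+(N:ℚ)+2)) := by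
  have hD : (2*((M:ℚ)+(N:ℚ)+2)) ≠ 0 := by positivity
  set Gf : ℕ → ℚ := fun s =>
    ((M+2+s:ℕ):ℚ) * ((N+2+s:ℕ):ℚ) * (Nat.choose (M+N+2) (M+2+s) : ℚ)
      * (Nat.choose (M+N+2) (N+2+s) : ℚ) / (2*((M:ℚ)+(N:ℚ)+2)) with hGf
  have hstep : ∀ t ∈ Finset.range (min M N + 1),
      ((t:ℚ)+1) * (Nat.choose (M+N+2) (M-t) : ℚ) * (Nat.choose (M+N+2) (N-t) : ℚ)
      = Gf t - Gf (t+1) := by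
    intro t ht
    have ht' := Finset.mem_range.mp ht
    have htM : t ≤ M := by omega
    have htN : t ≤ N := by omega
    have h1 : (Nat.choose (M+N+2) (M-t) : ℚ) = (Nat.choose (M+N+2) (N+2+t) : ℚ) := by
      rw [show M - t = (M+N+2) - (N+2+t) from by omega, Nat.choose_symm (by omega)]
    have h2 : (Nat.choose (M+N+2) (N-t) : ℚ) = (Nat.choose (M+N+2) (M+2+t) : ℚ) := by
      rw [show N - t = (M+N+2) - (M+2+t) from by omega, Nat.choose_symm (by omega)]
    have f3 : ((M+2+(t+1):ℕ):ℚ) * (Nat.choose (M+N+2) (M+2+(t+1)) : ℚ)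
        = ((N:ℚ)-(t:ℚ)) * (Nat.choose (M+N+2) (M+2+t) : ℚ) := by
      have h := Nat.choose_succ_right_eq (M+N+2) (M+2+t)
      rw [show M+N+2 - (M+2+t) = N - t from by omega] at h
      have hc := congrArg (Nat.cast : ℕ → ℚ) h
      push_cast [Nat.cast_sub htN] at hc
      rw [show M+2+(t+1) = M+2+t+1 from by omega]
      push_cast
      linear_combination hc
    have f4 : ((N+2+(t+1):ℕ):ℚ) * (Nat.choose (M+N+2) (N+2+(t+1)) : ℚ)
        = ((M:ℚ)-(t:ℚ)) * (Nat.choose (M+N+2) (N+2+t) : ℚ) := by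
      have h := Nat.choose_succ_right_eq (M+N+2) (N+2+t)
      rw [show M+N+2 - (N+2+t) = M - t from by omega] at h
      have hc := congrArg (Nat.cast : ℕ → ℚ) h
      push_cast [Nat.cast_sub htM] at hc
      rw [show N+2+(t+1) = N+2+t+1 from by omega]
      push_cast
      linear_combination hc
    rw [h1, h2, hGf]
    rw [div_sub_div_same, eq_div_iff hD]
    have hP : ((M+2+(t+1):ℕ):ℚ) * ((N+2+(t+1):ℕ):ℚ)
          * (Nat.choose (M+N+2) (M+2+(t+1)) : ℚ) * (Nat.choose (M+N+2) (N+2+(t+1)) : ℚ)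
        = (((N:ℚ)-(t:ℚ)) * (Nat.choose (M+N+2) (M+2+t) : ℚ))
          * (((M:ℚ)-(t:ℚ)) * (Nat.choose (M+N+2) (N+2+t) : ℚ)) := by
      rw [← f3, ← f4]; ring
    rw [hP]
    push_cast
    ring
  rw [Finset.sum_congr rfl hstep, Finset.sum_range_sub' Gf (min M N + 1)]
  have hend : Gf (min M N + 1) = 0 := by
    rcases le_total M N with h | h
    · rw [hGf, min_eq_left h]
      have hz : Nat.choose (M+N+2) (N+2+(M+1)) = 0 := Nat.choose_eq_zero_of_lt (by omega)
      simp [hz]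
    · rw [hGf, min_eq_right h]
      have hz : Nat.choose (M+N+2) (M+2+(N+1)) = 0 := Nat.choose_eq_zero_of_lt (by omega)
      simp [hz]
  rw [hend, sub_zero, hGf]
  have g3 : ((M+2:ℕ):ℚ) * (Nat.choose (M+N+2) (M+2) : ℚ)
      = ((N:ℚ)+1) * (Nat.choose (M+N+2) (M+1) : ℚ) := by
    have h := Nat.choose_succ_right_eq (M+N+2) (M+1)
    rw [show M+N+2 - (M+1) = N+1 from by omega] at h
    have hc := congrArg (Nat.cast : ℕ → ℚ) h
    push_cast at hc ⊢
    linear_combination hc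
  have g4 : ((N+2:ℕ):ℚ) * (Nat.choose (M+N+2) (N+2) : ℚ)
      = ((M:ℚ)+1) * (Nat.choose (M+N+2) (N+1) : ℚ) := by
    have h := Nat.choose_succ_right_eq (M+N+2) (N+1)
    rw [show M+N+2 - (N+1) = M+1 from by omega] at h
    have hc := congrArg (Nat.cast : ℕ → ℚ) h
    push_cast at hc ⊢
    linear_combination hc
  rw [div_eq_div_iff hD hD]
  rw [show M+2+0 = M+2 from by omega, show N+2+0 = N+2 from by omega]
  have expand : ((M+2:ℕ):ℚ) * ((N+2:ℕ):ℚ) * (Nat.choose (M+N+2) (M+2) : ℚ)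
        * (Nat.choose (M+N+2) (N+2) : ℚ)
      = (((M+2:ℕ):ℚ) * (Nat.choose (M+N+2) (M+2) : ℚ))
        * (((N+2:ℕ):ℚ) * (Nat.choose (M+N+2) (N+2) : ℚ)) := by ring
  rw [expand, g3, g4]
  ring

lemma icc_reindex {α : Type*} [AddCommMonoid α] (m : ℕ) (f : ℕ → α) :
    ∑ a ∈ Finset.Icc 1 (m+1), f a = ∑ i ∈ Finset.range (m+1), f (1+i) := by
  rw [← Finset.Ico_add_one_right_eq_Icc, Finset.sum_Ico_eq_sum_range]
  norm_num

theorem convex_polyomino_identity_S3 (m n : ℕ) (hm : 0 < m) (hn : 0 < n) :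
    ∑ a ∈ Finset.Icc 1 m, ∑ b ∈ Finset.Icc 1 n,
      ((Nat.choose (m + n - a + b - 1) (m - a) : ℚ) *
        (Nat.choose (m + n + a - b - 1) (n - b) : ℚ)) =
    (m * n : ℚ) / (2 * (m + n)) * (Nat.choose (m + n) m : ℚ) ^ 2 := by
  obtain ⟨M, rfl⟩ : ∃ M, m = M + 1 := ⟨m - 1, by omega⟩
  obtain ⟨N, rfl⟩ : ∃ N, n = N + 1 := ⟨n - 1, by omega⟩
  have step1 : (∑ a ∈ Finset.Icc 1 (M+1), ∑ b ∈ Finset.Icc 1 (N+1),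
      ((Nat.choose (M+1+(N+1) - a + b - 1) (M+1 - a) : ℚ) *
        (Nat.choose (M+1+(N+1) + a - b - 1) (N+1 - b) : ℚ)))
      = ∑ i ∈ Finset.range (M+1), ∑ j ∈ Finset.range (N+1),
          ((Nat.choose ((N-j)+(N+1+i)) i : ℚ) * (Nat.choose ((M-i)+(M+1+j)) j : ℚ)) := by
    rw [icc_reindex M]
    rw [← Finset.sum_range_reflect]
    refine Finset.sum_congr rfl (fun i hi => ?_)
    have hi' : i ≤ M := by have := Finset.mem_range.mp hi; omega
    rw [icc_reindex N]
    rw [← Finset.sum_range_reflect]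
    refine Finset.sum_congr rfl (fun j hj => ?_)
    have hj' : j ≤ N := by have := Finset.mem_range.mp hj; omega
    have e1 : M+1+(N+1) - (1+(M+1-1-i)) + (1+(N+1-1-j)) - 1 = (N-j)+(N+1+i) := by omega
    have e2 : M+1 - (1+(M+1-1-i)) = i := by omega
    have e3 : M+1+(N+1) + (1+(M+1-1-i)) - (1+(N+1-1-j)) - 1 = (M-i)+(M+1+j) := by omega
    have e4 : N+1 - (1+(N+1-1-j)) = j := by omega
    rw [e1, e2, e3, e4]
  rw [step1]
  have hA := congrArg (Nat.cast : ℕ → ℚ) (lemA M N)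
  push_cast at hA
  rw [hA]
  have step2 : (∑ t ∈ Finset.range (min M N + 1),
      (((t:ℚ)+1) * ((Nat.choose (M+N+2) (M-t) : ℚ) * (Nat.choose (M+N+2) (N-t) : ℚ))))
      = ∑ t ∈ Finset.range (min M N + 1),
          ((t:ℚ)+1) * (Nat.choose (M+N+2) (M-t) : ℚ) * (Nat.choose (M+N+2) (N-t) : ℚ) := by
    refine Finset.sum_congr rfl (fun t _ => by ring)
  rw [step2, lemB M N]
  have hsymm : (Nat.choose (M+N+2) (N+1) : ℚ) = (Nat.choose (M+N+2) (M+1) : ℚ) := by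
    rw [show N+1 = M+N+2-(M+1) from by omega, Nat.choose_symm (by omega)]
  rw [hsymm]
  have h2 : ((M:ℚ)+(N:ℚ)+2) ≠ 0 := by positivity
  push_cast
  rw [show M+1+(N+1) = M+N+2 from by omega]
  field_simp
  ring
end

section
/- (Theorem 2) Let m, n, r be natural numbers and let \(\alpha\) be a rational number with \(\alpha\neq 0\), \(\alpha\neq -1\), and \(\alpha m+n\neq 0\). Then \(\sum_{a=0}^{m-r-2}\sum_{b=0}^{n-r-2}\binom{(1+\alpha)m-a+b-1}{m-r-2-a}\binom{(1+\alpha^{-1})n+a-b-1}{n-r-2-b}+\sum_{a=0}^{m+r}\sum_{b=0}^{n+r}\binom{(1+\alpha)m-a+b-1}{m+r-a}\binom{(1+\alpha^{-1})n+a-b-1}{n+r-b}=\frac{2mn}{(1+\alpha)(m+\alpha^{-1}n)}\binom{(1+\alpha)m}{m}\binom{(1+\alpha^{-1})n}{n}+\sum_{k=-r}^{r}(r-|k|+1)\binom{(1+\alpha)m}{m-k}\binom{(1+\alpha^{-1})n}{n-k}\), where sums over empty ranges are 0 and k ranges over integers. -/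
/-- The generalized binomial coefficient `x(x-1)⋯(x-k+1)/k!` for a rational `x`
and a natural number `k`. -/
noncomputable def qbinom (x : ℚ) (k : ℕ) : ℚ :=
  (∏ i ∈ Finset.range k, (x - (i : ℚ))) / (Nat.factorial k : ℚ)

/-- The generalized binomial coefficient for a rational `x` and an integer `k`,
which is `0` when `k < 0`. -/
noncomputable def qbinomZ (x : ℚ) (k : ℤ) : ℚ :=
  if k < 0 then 0 else qbinom x k.toNat

/-!
Put `x = (1 + α) m`, `y = (1 + α⁻¹) n` and `p k = C(x, m - k) C(y, n - k)`. Reflecting both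
summation indices turns each double sum on the left into a rectangular partial sum (`rectSum`) of
`C(u + i - j - 1, i) C(v - i + j - 1, j)`, with `u = x - m + n`, `v = y + m - n`. Along the
diagonal these rectangles form a function `H = diagSum` of one integer `d` (upper limits
`m - 1 - d`, `n - 1 - d`), and the left side is `H (r + 1) + H (-(r + 1))`. Two Pascal steps make
the rows and columns of the rectangles telescope, so the second difference of `H` is exactly `p`.
As `H` vanishes for `d ≥ min m n`, summing second differences gives `H 0 = ∑ k p k` and
`H (r + 1) + H (-(r + 1)) = 2 H 0 + ∑_{|k| ≤ r} (r + 1 - |k|) p k`. Finally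
`(x - m)(y - n) = m n` makes `(x + y) k p k` telescope, so `(x + y) H 0 = m n C(x, m) C(y, n)`.
-/

open Finset

theorem qbinom_eq_choose (x : ℚ) (k : ℕ) : qbinom x k = Ring.choose x k := by
  rw [Ring.choose_eq_smul, qbinom, ← descPochhammer_eval_eq_prod_range, smul_eq_mul,
    ← Polynomial.aeval_eq_smeval, Polynomial.aeval_def, ← Polynomial.eval_map,
    descPochhammer_map, div_eq_inv_mul]

lemma qbinomZ_of_neg (x : ℚ) {k : ℤ} (hk : k < 0) : qbinomZ x k = 0 := by
  simp [qbinomZ, hk]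

@[simp] lemma qbinomZ_natCast (x : ℚ) (k : ℕ) : qbinomZ x k = Ring.choose x k := by
  simp [qbinomZ, qbinom_eq_choose]

@[simp] lemma qbinomZ_zero (x : ℚ) : qbinomZ x 0 = 1 := by
  simp [qbinomZ, qbinom]

lemma qbinomZ_succ_succ (x : ℚ) (k : ℤ) :
    qbinomZ (x + 1) (k + 1) = qbinomZ x k + qbinomZ x (k + 1) := by
  rcases lt_trichotomy k (-1) with hk | rfl | hk
  · simp [qbinomZ_of_neg, show k + 1 < 0 by omega, show k < 0 by omega]
  · simp [qbinomZ_of_neg]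
  · lift k to ℕ using (by omega)
    simp only [← Nat.cast_succ, qbinomZ_natCast]
    exact Ring.choose_succ_succ x k

lemma succ_mul_qbinomZ_succ (x : ℚ) (k : ℤ) :
    (k + 1) * qbinomZ x (k + 1) = (x - k) * qbinomZ x k := by
  rcases lt_or_ge k 0 with hk | hk
  · rw [qbinomZ_of_neg x hk, mul_zero]
    rcases (show k + 1 < 0 ∨ k + 1 = 0 by omega) with hk1 | hk1
    · rw [qbinomZ_of_neg x hk1, mul_zero]
    · rw [show (k : ℚ) + 1 = 0 by exact_mod_cast hk1, zero_mul]
  · lift k to ℕ using hk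
    have h := Ring.choose_smul_choose x (Nat.le_succ k)
    rw [Nat.choose_succ_self_right, Nat.succ_sub (le_refl k), Nat.sub_self,
      Ring.choose_one_right, nsmul_eq_mul] at h
    simp only [Int.cast_natCast, ← Nat.cast_succ, qbinomZ_natCast]
    push_cast at h ⊢
    rw [h, mul_comm]

section IntervalSums

variable {M : Type*} [AddCommGroup M]

lemma sum_Icc_add_one_right (f : ℤ → M) {a b : ℤ} (h : a ≤ b + 1) :
    ∑ k ∈ Icc a (b + 1), f k = ∑ k ∈ Icc a b, f k + f (b + 1) := by
  rw [← insert_Icc_right_eq_Icc_add_one h, sum_insert (by simp), add_comm]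

lemma sum_Icc_neg_add_one (f : ℤ → M) (r : ℕ) :
    ∑ k ∈ Icc (-((r : ℤ) + 1)) (r + 1), f k =
      f (-((r : ℤ) + 1)) + f (r + 1) + ∑ k ∈ Icc (-(r : ℤ)) r, f k := by
  have : Icc (-((r : ℤ) + 1)) (r + 1) =
      insert (-((r : ℤ) + 1)) (insert ((r : ℤ) + 1) (Icc (-(r : ℤ)) r)) := by
    ext k; simp only [mem_Icc, mem_insert]; omega
  rw [this, sum_insert (by simp only [mem_insert, mem_Icc]; omega), sum_insert (by simp),
    add_assoc]

lemma sum_Icc_zero_sub (f : ℤ → M) (N : ℤ) :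
    ∑ a ∈ Icc 0 N, f (N - a) = ∑ a ∈ Icc 0 N, f a :=
  sum_nbij' (N - ·) (N - ·) (fun a ha => by simp only [mem_Icc] at ha ⊢; omega)
    (fun a ha => by simp only [mem_Icc] at ha ⊢; omega) (by simp) (by simp) (by simp)

lemma sum_Icc_zero_add_one_sub_sum_Icc_zero {f g φ : ℤ → M} (hg : ∀ j < 0, g j = 0)
    (hφ : ∀ j < 0, φ j = 0) (h : ∀ j, f j - g (j - 1) = φ j - φ (j - 1)) (Q : ℤ) :
    ∑ j ∈ Icc 0 (Q + 1), f j - ∑ j ∈ Icc 0 Q, g j = φ (Q + 1) := by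
  rcases lt_or_ge Q (-1) with hQ | hQ
  · rw [Icc_eq_empty (by omega), Icc_eq_empty (by omega), hφ _ (by omega)]
    simp
  induction Q, hQ using Int.leInduction with
  | base =>
    have := h 0
    simp_all
  | succ Q hQ ih =>
    have hstep := h (Q + 1 + 1)
    rw [add_sub_cancel_right] at hstep
    rw [sum_Icc_add_one_right f (by omega : (0 : ℤ) ≤ Q + 1 + 1),
      sum_Icc_add_one_right g (by omega : (0 : ℤ) ≤ Q + 1),
      ← sub_add_cancel (φ _) (φ (Q + 1)), ← hstep, ← ih]
    abel

end IntervalSums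

section SecondDifference

variable {R : Type*} [CommRing R]

lemma sum_range_mul_secondDiff (f : ℤ → R) (s : ℕ) :
    ∑ k ∈ range (s + 1), (k : R) * (f (k + 1) - 2 * f k + f (k - 1)) =
      f 0 - f s + s * (f (s + 1) - f s) := by
  induction s with
  | zero => simp
  | succ s ih =>
    rw [sum_range_succ, ih]
    push_cast
    ring_nf

lemma sum_Icc_neg_secondDiff (f : ℤ → R) (r : ℕ) :
    ∑ k ∈ Icc (-(r : ℤ)) r, (f (k + 1) - 2 * f k + f (k - 1)) =
      f (r + 1) - f r - (f (-r) - f (-r - 1)) := by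
  induction r with
  | zero =>
    simp only [Nat.cast_zero, neg_zero, Icc_self, sum_singleton]
    ring
  | succ r ih =>
    push_cast
    rw [sum_Icc_neg_add_one, ih]
    ring_nf

lemma apply_add_one_add_apply_neg_eq [LinearOrder R] [IsStrictOrderedRing R] (f : ℤ → R)
    (r : ℕ) :
    f (r + 1) + f (-(r + 1)) = 2 * f 0 +
      ∑ k ∈ Icc (-(r : ℤ)) r,
        ((r : R) - |(k : R)| + 1) * (f (k + 1) - 2 * f k + f (k - 1)) := by
  induction r with
  | zero =>
    norm_num
    ring
  | succ r ih =>
    push_cast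
    have hw : ∀ k : ℤ, ((r : R) + 1 - |(k : R)| + 1) * (f (k + 1) - 2 * f k + f (k - 1)) =
        ((r : R) - |(k : R)| + 1) * (f (k + 1) - 2 * f k + f (k - 1)) +
          (f (k + 1) - 2 * f k + f (k - 1)) := fun k => by ring
    rw [sum_Icc_neg_add_one, sum_congr rfl fun k _ => hw k, sum_add_distrib,
      sum_Icc_neg_secondDiff, ← sub_eq_iff_eq_add'.mpr ih]
    have hr : |(r : R) + 1| = r + 1 := abs_of_nonneg (by positivity)
    push_cast
    rw [abs_neg, hr]
    ring_nf

end SecondDifference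

lemma qbinomZ_mul_sub_qbinomZ_mul (x y : ℚ) (k l : ℤ) :
    qbinomZ x (k + 1) * qbinomZ (y + 1) l - qbinomZ (x + 1) (k + 1) * qbinomZ y (l - 1) =
      qbinomZ x (k + 1) * qbinomZ y l - qbinomZ x k * qbinomZ y (l - 1) := by
  have hy := qbinomZ_succ_succ y (l - 1)
  rw [sub_add_cancel] at hy
  rw [hy, qbinomZ_succ_succ x k]
  ring

namespace GuoZeng

variable (u v : ℚ)

noncomputable def summand (i j : ℤ) : ℚ :=
  qbinomZ (u + i - j - 1) i * qbinomZ (v - i + j - 1) j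

noncomputable def rectSum (P Q : ℤ) : ℚ :=
  ∑ i ∈ Icc 0 P, ∑ j ∈ Icc 0 Q, summand u v i j

variable {u v}

lemma summand_of_neg_left {i : ℤ} (hi : i < 0) (j : ℤ) : summand u v i j = 0 := by
  rw [summand, qbinomZ_of_neg _ hi, zero_mul]

lemma summand_of_neg_right (i : ℤ) {j : ℤ} (hj : j < 0) : summand u v i j = 0 := by
  rw [summand, qbinomZ_of_neg _ hj, mul_zero]

lemma rectSum_of_neg_left {P : ℤ} (hP : P < 0) (Q : ℤ) : rectSum u v P Q = 0 := by
  rw [rectSum, Icc_eq_empty (by omega), sum_empty]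

lemma rectSum_of_neg_right (P : ℤ) {Q : ℤ} (hQ : Q < 0) : rectSum u v P Q = 0 := by
  simp [rectSum, Icc_eq_empty (show ¬(0 ≤ Q) by omega)]

lemma rectSum_add_one_add_one (P Q : ℤ) :
    rectSum u v (P + 1) (Q + 1) =
      rectSum u v P Q + ∑ j ∈ Icc 0 (Q + 1), summand u v (P + 1) j +
        ∑ i ∈ Icc 0 P, summand u v i (Q + 1) := by
  rcases lt_or_ge (P + 1) 0 with hP | hP
  · simp [rectSum_of_neg_left hP, rectSum_of_neg_left (show P < 0 by omega),
      summand_of_neg_left hP, Icc_eq_empty (show ¬(0 ≤ P) by omega)]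
  rcases lt_or_ge (Q + 1) 0 with hQ | hQ
  · simp [rectSum_of_neg_right _ hQ, rectSum_of_neg_right _ (show Q < 0 by omega),
      summand_of_neg_right _ hQ, Icc_eq_empty (show ¬(0 ≤ Q + 1) by omega)]
  simp only [rectSum, sum_Icc_add_one_right _ hP, sum_Icc_add_one_right _ hQ, sum_add_distrib]
  ring

lemma sum_row_sub (P Q : ℤ) :
    ∑ j ∈ Icc 0 (Q + 1), summand u v (P + 1) j - ∑ j ∈ Icc 0 Q, summand u v P j =
      qbinomZ (u + P - Q - 1) (P + 1) * qbinomZ (v - P + Q) (Q + 1) := by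
  have h := sum_Icc_zero_add_one_sub_sum_Icc_zero (f := fun j => summand u v (P + 1) j)
    (g := fun j => summand u v P j)
    (φ := fun j => qbinomZ (u + P - j) (P + 1) * qbinomZ (v - P + j - 1) j)
    (fun j hj => summand_of_neg_right _ hj) (fun j hj => by simp [qbinomZ_of_neg _ hj])
    (fun j => ?_) Q
  · convert h using 3 <;> push_cast <;> ring
  have := qbinomZ_mul_sub_qbinomZ_mul (u + P - j) (v - P + j - 2) P j
  simp only [summand]
  push_cast
  ring_nf at this ⊢
  linear_combination -this

lemma sum_col_sub (P Q : ℤ) :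
    ∑ i ∈ Icc 0 P, summand u v i (Q + 1) - ∑ i ∈ Icc 0 (P - 1), summand u v i Q =
      qbinomZ (u + P - Q - 1) P * qbinomZ (v - P + Q) (Q + 1) := by
  have h := sum_Icc_zero_add_one_sub_sum_Icc_zero (f := fun i => summand u v i (Q + 1))
    (g := fun i => summand u v i Q)
    (φ := fun i => qbinomZ (u + i - Q - 1) i * qbinomZ (v - i + Q) (Q + 1))
    (fun i hi => summand_of_neg_left hi _) (fun i hi => by simp [qbinomZ_of_neg _ hi])
    (fun i => ?_) (P - 1)
  · simpa using h
  have := qbinomZ_mul_sub_qbinomZ_mul (v - i + Q) (u + i - Q - 2) Q i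
  simp only [summand]
  push_cast
  ring_nf at this ⊢
  linear_combination -this

lemma rectSum_secondDiff (P Q : ℤ) :
    rectSum u v (P + 1) (Q + 1) - 2 * rectSum u v P Q + rectSum u v (P - 1) (Q - 1) =
      qbinomZ (u + P - Q) (P + 1) * qbinomZ (v - P + Q) (Q + 1) := by
  have hPQ := rectSum_add_one_add_one (u := u) (v := v) (P - 1) (Q - 1)
  rw [sub_add_cancel, sub_add_cancel] at hPQ
  have hpascal := qbinomZ_succ_succ (u + P - Q - 1) P
  rw [sub_add_cancel] at hpascal
  rw [rectSum_add_one_add_one, hPQ, hpascal]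
  linear_combination sum_row_sub P Q + sum_col_sub P Q

noncomputable def diagSum (x y : ℚ) (m n : ℕ) (d : ℤ) : ℚ :=
  rectSum (x - m + n) (y + m - n) (m - 1 - d) (n - 1 - d)

variable {x y : ℚ} {m n : ℕ}

lemma diagSum_secondDiff (d : ℤ) :
    diagSum x y m n (d + 1) - 2 * diagSum x y m n d + diagSum x y m n (d - 1) =
      qbinomZ x (m - d) * qbinomZ y (n - d) := by
  have h := rectSum_secondDiff (u := x - m + n) (v := y + m - n) (m - 1 - d) (n - 1 - d)
  have hx : x - m + n + ((m - 1 - d : ℤ) : ℚ) - ((n - 1 - d : ℤ) : ℚ) = x := by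
    push_cast; ring
  have hy : y + m - n - ((m - 1 - d : ℤ) : ℚ) + ((n - 1 - d : ℤ) : ℚ) = y := by
    push_cast; ring
  rw [hx, hy] at h
  rw [diagSum, diagSum, diagSum, show (m : ℤ) - d = m - 1 - d + 1 by ring,
    show (n : ℤ) - d = n - 1 - d + 1 by ring,
    show (m : ℤ) - 1 - (d + 1) = m - 1 - d - 1 by ring,
    show (n : ℤ) - 1 - (d + 1) = n - 1 - d - 1 by ring,
    show (m : ℤ) - 1 - (d - 1) = m - 1 - d + 1 by ring,
    show (n : ℤ) - 1 - (d - 1) = n - 1 - d + 1 by ring]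
  linear_combination h

lemma diagSum_of_min_le {d : ℤ} (hd : ((min m n : ℕ) : ℤ) ≤ d) : diagSum x y m n d = 0 := by
  rcases le_total m n with h | h
  · rw [min_eq_left h] at hd
    exact rectSum_of_neg_left (by omega) _
  · rw [min_eq_right h] at hd
    exact rectSum_of_neg_right _ (by omega)

lemma diagSum_zero :
    diagSum x y m n 0 =
      ∑ k ∈ range (min m n + 1), (k : ℚ) * (qbinomZ x (m - k) * qbinomZ y (n - k)) := by
  have h := sum_range_mul_secondDiff (diagSum x y m n) (min m n)
  rw [diagSum_of_min_le le_rfl, diagSum_of_min_le (d := (min m n : ℕ) + 1) (by omega)] at h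
  simp only [diagSum_secondDiff] at h
  rw [h]
  ring

lemma add_mul_sum_range_mul_qbinomZ (hxy : (x - m) * (y - n) = m * n) :
    (x + y) * ∑ k ∈ range (min m n + 1), (k : ℚ) * (qbinomZ x (m - k) * qbinomZ y (n - k)) =
      m * n * (qbinomZ x m * qbinomZ y n) := by
  set Ψ : ℕ → ℚ := fun k =>
    (x - m + k) * (y - n + k) * (qbinomZ x (m - k) * qbinomZ y (n - k))
  have hΨ : ∀ k : ℕ,
      Ψ (k + 1) = (m - k) * (n - k) * (qbinomZ x (m - k) * qbinomZ y (n - k)) := by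
    intro k
    have hx := succ_mul_qbinomZ_succ x (m - k - 1)
    have hy := succ_mul_qbinomZ_succ y (n - k - 1)
    simp only [Ψ, sub_add_cancel] at hx hy ⊢
    push_cast at hx hy ⊢
    rw [show (m : ℤ) - (k + 1) = m - k - 1 by ring,
      show (n : ℤ) - (k + 1) = n - k - 1 by ring]
    linear_combination (-(y - n + k + 1) * qbinomZ y (n - k - 1)) * hx
      + (-((m : ℚ) - k) * qbinomZ x (m - k)) * hy
  have hterm : ∀ k ∈ range (min m n + 1),
      (x + y) * ((k : ℚ) * (qbinomZ x (m - k) * qbinomZ y (n - k))) = Ψ k - Ψ (k + 1) := by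
    intro k _
    rw [hΨ]
    linear_combination (-(qbinomZ x (m - k) * qbinomZ y (n - k))) * hxy
  rw [mul_sum, sum_congr rfl hterm, sum_range_sub', hΨ]
  have hmin : ((m : ℚ) - (min m n : ℕ)) * (n - (min m n : ℕ)) = 0 := by
    rcases le_total m n with h | h <;> simp [h]
  simp only [Ψ, hmin, zero_mul, sub_zero, CharP.cast_eq_zero, add_zero]
  linear_combination (qbinomZ x m * qbinomZ y n) * hxy

lemma sum_sum_qbinomZ_eq_diagSum (x y : ℚ) (m n : ℕ) (d : ℤ) :
    ∑ a ∈ Icc (0 : ℤ) (m - 1 - d), ∑ b ∈ Icc (0 : ℤ) (n - 1 - d),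
      qbinomZ (x - a + b - 1) (m - 1 - d - a) * qbinomZ (y + a - b - 1) (n - 1 - d - b) =
        diagSum x y m n d := by
  rw [diagSum, rectSum, ← sum_Icc_zero_sub]
  refine sum_congr rfl fun a _ => ?_
  rw [← sum_Icc_zero_sub]
  refine sum_congr rfl fun b _ => ?_
  rw [summand]
  congr 2 <;> push_cast <;> ring

end GuoZeng

open GuoZeng

theorem guo_zeng_theorem2 (m n r : ℕ) (α : ℚ) (hα : α ≠ 0) (hα1 : α ≠ -1)
    (h : α * m + n ≠ 0) :
    (∑ a ∈ Finset.Icc (0 : ℤ) ((m : ℤ) - r - 2), ∑ b ∈ Finset.Icc (0 : ℤ) ((n : ℤ) - r - 2),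
      qbinomZ ((1 + α) * m - a + b - 1) ((m : ℤ) - r - 2 - a) *
        qbinomZ ((1 + α⁻¹) * n + a - b - 1) ((n : ℤ) - r - 2 - b)) +
    (∑ a ∈ Finset.Icc (0 : ℤ) ((m : ℤ) + r), ∑ b ∈ Finset.Icc (0 : ℤ) ((n : ℤ) + r),
      qbinomZ ((1 + α) * m - a + b - 1) ((m : ℤ) + r - a) *
        qbinomZ ((1 + α⁻¹) * n + a - b - 1) ((n : ℤ) + r - b)) =
    2 * (m * n : ℚ) / ((1 + α) * (m + α⁻¹ * n)) *
      qbinom ((1 + α) * m) m * qbinom ((1 + α⁻¹) * n) n +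
    ∑ k ∈ Finset.Icc (-(r : ℤ)) (r : ℤ),
      ((r : ℚ) - |(k : ℚ)| + 1) * qbinomZ ((1 + α) * m) ((m : ℤ) - k) *
        qbinomZ ((1 + α⁻¹) * n) ((n : ℤ) - k) := by
  set x := (1 + α) * m with hx
  set y := (1 + α⁻¹) * n with hy
  have h1α : 1 + α ≠ 0 := fun h' => hα1 (by linear_combination h')
  have hsum : (1 + α) * (m + α⁻¹ * n) = x + y := by
    rw [hx, hy]
    field_simp
    ring
  have hsum_ne : x + y ≠ 0 := by
    rw [← hsum, show (m : ℚ) + α⁻¹ * n = α⁻¹ * (α * m + n) by field_simp]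
    exact mul_ne_zero h1α (mul_ne_zero (inv_ne_zero hα) h)
  have hxy : (x - m) * (y - n) = m * n := by
    rw [hx, hy]
    field_simp
    ring
  rw [show (m : ℤ) - r - 2 = m - 1 - (r + 1) by ring,
    show (n : ℤ) - r - 2 = n - 1 - (r + 1) by ring,
    show (m : ℤ) + r = m - 1 - (-(r + 1)) by ring,
    show (n : ℤ) + r = n - 1 - (-(r + 1)) by ring,
    sum_sum_qbinomZ_eq_diagSum, sum_sum_qbinomZ_eq_diagSum,
    apply_add_one_add_apply_neg_eq, hsum]
  have h0 : diagSum x y m n 0 = m * n / (x + y) * (qbinomZ x m * qbinomZ y n) := by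
    rw [diagSum_zero, div_mul_eq_mul_div, eq_div_iff hsum_ne]
    linear_combination add_mul_sum_range_mul_qbinomZ hxy
  simp only [diagSum_secondDiff, h0, qbinom_eq_choose, ← qbinomZ_natCast, mul_assoc]
  ring
end

section
/- Let m and n be natural numbers and let \(\alpha\) be a rational number with \(\alpha\neq 0\), \(\alpha\neq -1\), and \(\alpha m+n\neq 0\). Then \(\sum_{k=0}^{\min\{m,n\}} k\,\binom{(1+\alpha)m}{m-k}\binom{(1+\alpha^{-1})n}{n-k}=\frac{mn}{(1+\alpha)(m+\alpha^{-1}n)}\binom{(1+\alpha)m}{m}\binom{(1+\alpha^{-1})n}{n}\). -/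
/-!
The sum is evaluated by Gosper-style telescoping. For the summand
`t k = C((1+α)m, m-k) C((1+α⁻¹)n, n-k)` the coefficient ratio gives
`(m-k)(n-k) t k = (αm+k+1)(α⁻¹n+k+1) t (k+1)`, and with the certificate
`c k = (αk+n)(αm+k) / ((1+α)(αm+n))` this becomes `k t k = c k t k - c (k+1) t (k+1)`,
since `c k - k = α(m-k)(n-k) / ((1+α)(αm+n))` and
`c (k+1) = α(αm+k+1)(α⁻¹n+k+1) / ((1+α)(αm+n))`.
Summing over `k < min m n` leaves `c 0 t 0`, because `c (min m n) = min m n` absorbs the last term.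
-/

open Finset

lemma qbinom_succ_mul (x : ℚ) (j : ℕ) :
    ((j : ℚ) + 1) * qbinom x (j + 1) = (x - j) * qbinom x j := by
  simp only [qbinom, prod_range_succ, Nat.factorial_succ]
  push_cast
  field_simp

lemma sub_mul_qbinom_sub (a : ℚ) {m k : ℕ} (hk : k < m) :
    ((m : ℚ) - k) * qbinom a (m - k) = (a - m + k + 1) * qbinom a (m - (k + 1)) := by
  obtain ⟨j, hj⟩ : ∃ j, m = k + j + 1 := ⟨m - k - 1, by omega⟩
  rw [show m - k = j + 1 by omega, show m - (k + 1) = j by omega]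
  have := qbinom_succ_mul a j
  rw [hj]
  push_cast at this ⊢
  linear_combination this

lemma sum_range_succ_natCast_mul_eq_of_telescoping {R : Type*} [CommRing R] (t c : ℕ → R)
    (N : ℕ) (hstep : ∀ k < N, (k : R) * t k = c k * t k - c (k + 1) * t (k + 1))
    (hN : c N = N) :
    ∑ k ∈ range (N + 1), (k : R) * t k = c 0 * t 0 := by
  rw [sum_range_succ, sum_congr rfl fun k hk => hstep k (mem_range.mp hk),
    sum_range_sub' (fun k => c k * t k), hN]
  ring

noncomputable def guoZengTerm (α : ℚ) (m n k : ℕ) : ℚ :=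
  qbinom ((1 + α) * m) (m - k) * qbinom ((1 + α⁻¹) * n) (n - k)

noncomputable def guoZengCert (α : ℚ) (m n k : ℕ) : ℚ :=
  (α * k + n) * (α * m + k) / ((1 + α) * (α * m + n))

lemma guoZengTerm_ratio {α : ℚ} {m n k : ℕ} (hkm : k < m) (hkn : k < n) :
    ((m : ℚ) - k) * ((n : ℚ) - k) * guoZengTerm α m n k =
      (α * m + k + 1) * (α⁻¹ * n + k + 1) * guoZengTerm α m n (k + 1) := by
  unfold guoZengTerm
  linear_combination
    ((n : ℚ) - k) * qbinom ((1 + α⁻¹) * n) (n - k) * sub_mul_qbinom_sub ((1 + α) * m) hkm +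
    (α * m + k + 1) * qbinom ((1 + α) * m) (m - (k + 1)) *
      sub_mul_qbinom_sub ((1 + α⁻¹) * n) hkn

lemma guoZengCert_telescoping {α : ℚ} (hα : α ≠ 0) (hα1 : 1 + α ≠ 0) {m n k : ℕ}
    (h : α * m + n ≠ 0) (hkm : k < m) (hkn : k < n) :
    (k : ℚ) * guoZengTerm α m n k =
      guoZengCert α m n k * guoZengTerm α m n k -
        guoZengCert α m n (k + 1) * guoZengTerm α m n (k + 1) := by
  have hratio := guoZengTerm_ratio (α := α) hkm hkn
  unfold guoZengCert
  rw [div_mul_eq_mul_div, div_mul_eq_mul_div, ← sub_div, eq_div_iff (mul_ne_zero hα1 h)]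
  push_cast
  linear_combination -α * hratio -
    (α * m + k + 1) * n * guoZengTerm α m n (k + 1) * mul_inv_cancel₀ hα

lemma guoZengCert_min {α : ℚ} (hα1 : 1 + α ≠ 0) {m n : ℕ} (h : α * m + n ≠ 0) :
    guoZengCert α m n (min m n) = (min m n : ℕ) := by
  unfold guoZengCert
  rw [div_eq_iff (mul_ne_zero hα1 h)]
  rcases min_cases m n with ⟨hmin, -⟩ | ⟨hmin, -⟩ <;> rw [hmin] <;> ring

lemma guoZengCert_zero {α : ℚ} (hα : α ≠ 0) (m n : ℕ) :
    guoZengCert α m n 0 = (m * n : ℚ) / ((1 + α) * (m + α⁻¹ * n)) := by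
  unfold guoZengCert
  field_simp
  ring

theorem guo_zeng_single_sum (m n : ℕ) (α : ℚ) (hα : α ≠ 0) (hα1 : α ≠ -1)
    (h : α * m + n ≠ 0) :
    ∑ k ∈ Finset.Icc 0 (min m n),
      (k : ℚ) * qbinom ((1 + α) * m) (m - k) * qbinom ((1 + α⁻¹) * n) (n - k) =
    (m * n : ℚ) / ((1 + α) * (m + α⁻¹ * n)) *
      qbinom ((1 + α) * m) m * qbinom ((1 + α⁻¹) * n) n := by
  have hα1' : 1 + α ≠ 0 := fun h0 => hα1 (by linarith)
  have hsum := sum_range_succ_natCast_mul_eq_of_telescoping (guoZengTerm α m n)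
    (guoZengCert α m n) (min m n)
    (fun k hk => guoZengCert_telescoping hα hα1' h (lt_min_iff.mp hk).1 (lt_min_iff.mp hk).2)
    (guoZengCert_min hα1' h)
  rw [← Nat.range_succ_eq_Icc_zero]
  simpa only [guoZengTerm, guoZengCert_zero hα, mul_assoc, Nat.sub_zero] using hsum
end

section
/- (Corollary 1) For all positive integers m, n, p, and q, the identity \(\sum_{a=1}^{pm}\sum_{b=1}^{qn}\binom{pm+qm-a+b-1}{pm-a}\binom{pn+qn+a-b-1}{qn-b}=\frac{pqmn}{(p+q)(m+n)}\binom{pm+qm}{pm}\binom{pn+qn}{pn}\) holds (as an identity of rational numbers). -/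
/-!
Put `M = p m`, `M' = q m`, `N = p n`, `N' = q n`, so that `M' N = M N'`. The upward Vandermonde
convolution `∑_{x+y=i} C(a+x,x) C(b+y,y) = C(a+b+1+i,i)`, applied once to expand the first binomial
and once to resum, turns the inner sum over `b` into `∑_{x ≤ M-a} C(M'-1+x,x) C(M+N+N'-1-x,N'-1)`,
so the double sum is `∑_{x<M} (M-x) f(x)`. Because `M' N = M N'`, this sum telescopes: with
`g(t) = t (M+N+N'-t) C(M'-1+t,t) C(M+N+N'-1-t,N'-1)` one has `g(t+1) - g(t) = (M'+N') (M-t) f(t)`,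
so `(M'+N')` times the sum is `g(M)`, which is the right-hand side up to the factor `M+M'`.
-/

open Finset PowerSeries

theorem Nat.sum_antidiagonal_add_choose_mul_add_choose (a b n : ℕ) :
    ∑ ij ∈ antidiagonal n, (a + ij.1).choose ij.1 * (b + ij.2).choose ij.2 =
      (a + b + 1 + n).choose n := by
  have h := congrArg (coeff n) (pow_add (mk 1 : ℤ⟦X⟧) (a + 1) (b + 1))
  rw [show a + 1 + (b + 1) = a + b + 1 + 1 by omega] at h
  simp only [mk_one_pow_eq_mk_choose_add, coeff_mul, coeff_mk] at h
  calc _ = ∑ ij ∈ antidiagonal n, (a + ij.1).choose a * (b + ij.2).choose b :=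
        sum_congr rfl fun ij _ => by rw [Nat.choose_symm_add, Nat.choose_symm_add]
    _ = (a + b + 1 + n).choose (a + b + 1) := by exact_mod_cast h.symm
    _ = _ := Nat.choose_symm_add

theorem Nat.sum_antidiagonal_choose_mul_choose_exchange (A c e i : ℕ) :
    ∑ kj ∈ antidiagonal e, (A + kj.1 + 1 + i).choose i * (c + kj.2).choose kj.2 =
      ∑ xy ∈ antidiagonal i, (A + xy.1).choose xy.1 * (xy.2 + c + 1 + e).choose e := by
  simp_rw [← Nat.sum_antidiagonal_add_choose_mul_add_choose, sum_mul, mul_sum]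
  rw [sum_comm]
  refine sum_congr rfl fun xy _ => sum_congr rfl fun kj _ => ?_
  rw [add_comm kj.1 xy.2, Nat.choose_symm_add]
  ring

theorem Finset.sum_Icc_sum_range_sub_add_one {M : Type*} [AddCommMonoid M] (n : ℕ) (f : ℕ → M) :
    ∑ a ∈ Icc 1 n, ∑ x ∈ range (n - a + 1), f x = ∑ x ∈ range n, (n - x) • f x := by
  rw [sum_comm' (t' := range n) (s' := fun x => Icc 1 (n - x))]
  · simp
  · intro a x
    simp only [mem_Icc, mem_range]
    omega

theorem sum_Icc_choose_mul_choose_eq_sum_range (M N A B a : ℕ) (ha : a ∈ Icc 1 M) :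
    ∑ b ∈ Icc 1 (B + 1),
        (M + (A + 1) - a + b - 1).choose (M - a) * (N + (B + 1) + a - b - 1).choose (B + 1 - b) =
      ∑ x ∈ range (M - a + 1), (A + x).choose x * (M + N + B - x).choose B := by
  rw [mem_Icc] at ha
  calc _ = ∑ kj ∈ antidiagonal B,
          (A + kj.1 + 1 + (M - a)).choose (M - a) * (N + a - 1 + kj.2).choose kj.2 := by
        refine sum_nbij' (fun b => (b - 1, B + 1 - b)) (fun kj => kj.1 + 1) ?_ ?_ ?_ ?_ ?_ <;>
          simp only [mem_Icc, HasAntidiagonal.mem_antidiagonal, Prod.forall, Prod.ext_iff] <;>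
          intros <;> first | omega | congr 2 <;> omega
    _ = _ := by
        rw [Nat.sum_antidiagonal_choose_mul_choose_exchange,
          Nat.sum_antidiagonal_eq_sum_range_succ_mk]
        refine sum_congr rfl fun x hx => ?_
        rw [mem_range] at hx
        congr 2
        omega

-- `y` stands for `M - (t + 1)`, so that no truncated subtraction occurs.
theorem choose_mul_choose_telescoping_step (A B N t y : ℕ)
    (h : (A + 1) * N = (t + 1 + y) * (B + 1)) :
    (t + 1) * (N + B + y + 1) * (A + (t + 1)).choose (t + 1) * (N + B + y).choose B =
      t * (N + B + y + 2) * (A + t).choose t * (N + B + y + 1).choose B +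
        (A + B + 2) * ((y + 1) * ((A + t).choose t * (N + B + y + 1).choose B)) := by
  have h₁ : (t + 1) * (A + (t + 1)).choose (t + 1) = (A + t + 1) * (A + t).choose t := by
    rw [← add_assoc, Nat.add_one_mul_choose_eq, mul_comm]
  have h₂ : (N + B + y + 1) * (N + B + y).choose B = (N + y + 1) * (N + B + y + 1).choose B := by
    have := Nat.choose_mul_succ_eq (N + B + y) B
    rw [show N + B + y + 1 - B = N + y + 1 by omega] at this
    linarith
  linear_combination ((N + B + y + 1) * (N + B + y).choose B) * h₁ +
    ((A + t + 1) * (A + t).choose t) * h₂ + ((A + t).choose t * (N + B + y + 1).choose B) * h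

theorem sum_range_sub_mul_choose_mul_choose (M N A B : ℕ) (h : (A + 1) * N = M * (B + 1)) :
    ∀ t ≤ M, (A + B + 2) * ∑ x ∈ range t, (M - x) * ((A + x).choose x * (M + N + B - x).choose B) =
      t * (M + N + B + 1 - t) * (A + t).choose t * (M + N + B - t).choose B := by
  intro t ht
  induction t with
  | zero => simp
  | succ t ih =>
    obtain ⟨y, rfl⟩ : ∃ y, M = t + 1 + y := ⟨M - (t + 1), by omega⟩
    rw [sum_range_succ, mul_add, ih (by omega), show t + 1 + y - t = y + 1 by omega,
      show t + 1 + y + N + B + 1 - t = N + B + y + 2 by omega,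
      show t + 1 + y + N + B - t = N + B + y + 1 by omega,
      show t + 1 + y + N + B + 1 - (t + 1) = N + B + y + 1 by omega,
      show t + 1 + y + N + B - (t + 1) = N + B + y by omega]
    exact (choose_mul_choose_telescoping_step A B N t y h).symm

theorem sum_Icc_Icc_choose_mul_choose (M M' N N' : ℕ) (hM' : 0 < M') (hN' : 0 < N')
    (h : M' * N = M * N') :
    (M' + N') * (M + M') * ∑ a ∈ Icc 1 M, ∑ b ∈ Icc 1 N',
        (M + M' - a + b - 1).choose (M - a) * (N + N' + a - b - 1).choose (N' - b) =
      M * M' * N' * (M + M').choose M * (N + N').choose N := by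
  obtain ⟨A, rfl⟩ : ∃ A, M' = A + 1 := ⟨M' - 1, by omega⟩
  obtain ⟨B, rfl⟩ : ∃ B, N' = B + 1 := ⟨N' - 1, by omega⟩
  have hA : (M + A + 1) * (A + M).choose M = (A + 1) * (M + (A + 1)).choose M := by
    have := Nat.add_one_mul_choose_eq (A + M) A
    rw [Nat.choose_symm_of_eq_add rfl,
      Nat.choose_symm_of_eq_add (show A + M + 1 = A + 1 + M by ring),
      show A + M + 1 = M + (A + 1) by ring] at this
    linear_combination this
  have hB : (N + B + 1) * (N + B).choose B = (B + 1) * (N + (B + 1)).choose N := by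
    have := Nat.add_one_mul_choose_eq (N + B) B
    rw [Nat.choose_symm_of_eq_add (show N + B + 1 = B + 1 + N by ring),
      show N + B + 1 = N + (B + 1) by ring] at this
    linear_combination this
  have hsum := sum_range_sub_mul_choose_mul_choose M N A B h M le_rfl
  rw [sum_congr rfl fun a ha => sum_Icc_choose_mul_choose_eq_sum_range M N A B a ha,
    sum_Icc_sum_range_sub_add_one]
  simp only [smul_eq_mul, show M + N + B + 1 - M = N + B + 1 by omega,
    show M + N + B - M = N + B by omega] at hsum ⊢
  linear_combination (M + A + 1) * hsum + (M * (N + B + 1) * (N + B).choose B) * hA +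
    (M * (A + 1) * (M + (A + 1)).choose M) * hB

theorem guo_zeng_corollary1_general (m n p q : ℕ) (hm : 0 < m) (hn : 0 < n)
    (hq : 0 < q) :
    ∑ a ∈ Finset.Icc 1 (p * m), ∑ b ∈ Finset.Icc 1 (q * n),
      ((Nat.choose (p * m + q * m - a + b - 1) (p * m - a) : ℚ) *
        (Nat.choose (p * n + q * n + a - b - 1) (q * n - b) : ℚ)) =
    (p * q * m * n : ℚ) / ((p + q) * (m + n)) *
      (Nat.choose (p * m + q * m) (p * m) : ℚ) *
      (Nat.choose (p * n + q * n) (p * n) : ℚ) := by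
  have key := sum_Icc_Icc_choose_mul_choose (p * m) (q * m) (p * n) (q * n)
    (by positivity) (by positivity) (by ring)
  qify at key
  have hpq : (p + q : ℚ) ≠ 0 := by positivity
  have hmn : (m + n : ℚ) ≠ 0 := by positivity
  have hqm : (q * m : ℚ) ≠ 0 := by positivity
  rw [div_mul_eq_mul_div, div_mul_eq_mul_div, eq_div_iff (mul_ne_zero hpq hmn)]
  refine mul_left_cancel₀ hqm ?_
  linear_combination key

theorem guo_zeng_corollary1 (m n p q : ℕ) (hm : 0 < m) (hn : 0 < n)
    (hp : 0 < p) (hq : 0 < q) :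
    ∑ a ∈ Finset.Icc 1 (p * m), ∑ b ∈ Finset.Icc 1 (q * n),
      ((Nat.choose (p * m + q * m - a + b - 1) (p * m - a) : ℚ) *
        (Nat.choose (p * n + q * n + a - b - 1) (q * n - b) : ℚ)) =
    (p * q * m * n : ℚ) / ((p + q) * (m + n)) *
      (Nat.choose (p * m + q * m) (p * m) : ℚ) *
      (Nat.choose (p * n + q * n) (p * n) : ℚ) :=
  guo_zeng_corollary1_general m n p q hm hn hq
end

section
/- For all positive integers m, n, p, and q, the identity \(\sum_{a=1}^{pm}\sum_{b=1}^{qn}\binom{pm+qm-a+b-1}{b-1}\binom{pn+qn+a-b-1}{a-1}=\frac{pqmn}{(p+q)(m+n)}\binom{pm+pn}{pm}\binom{qm+qn}{qm}\) holds (as an identity of rational numbers). -/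
/-!
Put `A = pm`, `B = qn`, `C = qm`, `D = pn`, so that `AB = CD`, and write `S(A,B,C,D)` for the
double sum and `T(A,B,C,D) = ∑ₜ t·C(B+C, B+t)·C(A+D, A+t)`. Pascal's rule on the first binomial
gives `S(A,B+1,C+1,D) = S(A,B+1,C,D) + S(A,B,C+1,D)`, and `T` obeys the same recursion; on the
axes `C = 0` and `B = 0` the upper and the ordinary Vandermonde identity evaluate `S` and `T`.
Induction on `B + C` then gives, for all `A, B, C, D` and `N = A+B+C+D`,
`S + C·C(N-1, A+C) = T + B·C(N-1, B+D)`.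
When `AB = CD` the two boundary terms agree after multiplying by `N`, and
`N·t·C(B+C, B+t)·C(A+D, A+t) = G(t) - G(t+1)` with `G(t) = (A+t)(B+t)·C(B+C, B+t)·C(A+D, A+t)`,
so `N·S = N·T = G(1) = CD·C(A+D, A)·C(B+C, C)`.
-/

open Finset

namespace Nat

theorem sum_antidiagonal_add_choose_mul_add_choose_s6 (a b n : ℕ) :
    ∑ ij ∈ antidiagonal n, (a + ij.1).choose a * (b + ij.2).choose b =
      (a + b + n + 1).choose (a + b + 1) := by
  induction a generalizing n with
  | zero => simpa [add_assoc] using sum_antidiagonal_choose_add b n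
  | succ a iha =>
    induction n with
    | zero => simp
    | succ n ihn =>
      have pascal : ∀ i, (a + 1 + (i + 1)).choose (a + 1) =
          (a + (i + 1)).choose a + (a + 1 + i).choose (a + 1) := fun i => by
        rw [show a + 1 + (i + 1) = a + (i + 1) + 1 by ring, choose_succ_succ', add_right_comm,
          add_assoc]
      have h := iha (n + 1)
      rw [Finset.Nat.sum_antidiagonal_succ] at h ⊢
      simp only [pascal, add_mul, sum_add_distrib, ihn, add_zero, choose_self] at h ⊢
      rw [← add_assoc, h, show a + 1 + b + (n + 1) + 1 = a + b + (n + 1) + 1 + 1 by ring,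
        show a + 1 + b + n + 1 = a + b + (n + 1) + 1 by ring,
        show a + 1 + b + 1 = a + b + 1 + 1 by ring, choose_succ_succ' (a + b + (n + 1) + 1)]

theorem sum_range_choose_mul_choose_add (m n k M : ℕ) (hM : m < M) :
    ∑ t ∈ range M, m.choose t * n.choose (k + t) = (m + n).choose (m + k) := by
  obtain ⟨M, rfl⟩ : ∃ M', M = M' + 1 := ⟨M - 1, by omega⟩
  induction m generalizing k M with
  | zero => simp [sum_range_succ']
  | succ m ih =>
    obtain ⟨M, rfl⟩ : ∃ M', M = M' + 1 := ⟨M - 1, by omega⟩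
    have h₁ := ih (k + 1) M (by omega)
    have h₂ := ih k (M + 1) (by omega)
    rw [sum_range_succ'] at h₂ ⊢
    simp only [choose_succ_succ', add_mul, sum_add_distrib, choose_zero_right] at h₂ ⊢
    rw [add_assoc, h₂, show m + 1 + n = m + n + 1 by ring, show m + 1 + k = m + k + 1 by ring,
      choose_succ_succ', add_comm, add_assoc m k 1, ← h₁]
    exact congrArg _ (sum_congr rfl fun t _ => by ring_nf)

theorem sum_range_succ_add_choose_mul (c B : ℕ) (f : ℕ → ℕ) :
    ∑ j ∈ range (B + 1), (c + 1 + j).choose j * f j =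
      ∑ j ∈ range (B + 1), (c + j).choose j * f j +
        ∑ j ∈ range B, (c + 1 + j).choose j * f (j + 1) := by
  have pascal : ∀ j, (c + 1 + (j + 1)).choose (j + 1) =
      (c + 1 + j).choose j + (c + (j + 1)).choose (j + 1) := fun j => by
    rw [← add_assoc, choose_succ_succ', add_right_comm, add_assoc]
  rw [sum_range_succ', sum_range_succ' (fun j => (c + j).choose j * f j)]
  simp only [pascal, add_mul, sum_add_distrib, add_zero, choose_zero_right]
  ring

end Nat

def doubleSum (A B C D : ℕ) : ℕ :=
  ∑ i ∈ range A, ∑ j ∈ range B, (C + (A - 1 - i) + j).choose j * (D + (B - 1 - j) + i).choose i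

/-- The summands with `t ≥ C` vanish, so every `M ≥ C` gives the same value; a fixed `M` lets
`B` and `C` vary in the induction. -/
def weightedSum (M A B C D : ℕ) : ℕ :=
  ∑ t ∈ range M, (t + 1) * (B + C).choose (B + t + 1) * (A + D).choose (A + t + 1)

theorem doubleSum_succ_succ (A B C D : ℕ) :
    doubleSum A (B + 1) (C + 1) D = doubleSum A (B + 1) C D + doubleSum A B (C + 1) D := by
  simp only [doubleSum, ← sum_add_distrib]
  refine sum_congr rfl fun i _ => ?_
  have := Nat.sum_range_succ_add_choose_mul (C + (A - 1 - i)) B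
    (fun j => (D + (B + 1 - 1 - j) + i).choose i)
  simpa only [show ∀ j, B + 1 - 1 - (j + 1) = B - 1 - j by omega,
    add_right_comm C (A - 1 - i) 1] using this

theorem weightedSum_succ_succ (M A B C D : ℕ) :
    weightedSum M A (B + 1) (C + 1) D =
      weightedSum M A (B + 1) C D + weightedSum M A B (C + 1) D := by
  simp only [weightedSum, ← sum_add_distrib]
  refine sum_congr rfl fun t _ => ?_
  rw [show B + 1 + (C + 1) = B + C + 1 + 1 by ring, show B + 1 + t + 1 = B + t + 1 + 1 by ring,
    Nat.choose_succ_succ', show B + 1 + C = B + C + 1 by ring,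
    show B + (C + 1) = B + C + 1 by ring]
  ring

theorem doubleSum_C_zero (A B D : ℕ) :
    doubleSum A B 0 D = B * (A + B + D - 1).choose (B + D) := by
  have inner : ∀ j ∈ range B, ∑ i ∈ range A,
      (0 + (A - 1 - i) + j).choose j * (D + (B - 1 - j) + i).choose i =
        (A + B + D - 1).choose (B + D) := fun j hj => by
    rw [mem_range] at hj
    rcases A with _ | J
    · simp [Nat.choose_eq_zero_of_lt (by omega : B + D - 1 < B + D)]
    have h := Nat.sum_antidiagonal_add_choose_mul_add_choose_s6 (D + (B - 1 - j)) j J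
    rw [Finset.Nat.sum_antidiagonal_eq_sum_range_succ
      (fun i a => (D + (B - 1 - j) + i).choose (D + (B - 1 - j)) * (j + a).choose j)] at h
    rw [show J + 1 + B + D - 1 = D + (B - 1 - j) + j + J + 1 by omega,
      show B + D = D + (B - 1 - j) + j + 1 by omega, ← h]
    refine sum_congr rfl fun i hi => ?_
    rw [mem_range] at hi
    rw [mul_comm, Nat.choose_symm_add, show 0 + (J + 1 - 1 - i) + j = j + (J - i) by omega]
  rw [doubleSum, sum_comm, sum_congr rfl inner, sum_const, card_range, smul_eq_mul]

theorem weightedSum_C_zero (M A B D : ℕ) : weightedSum M A B 0 D = 0 :=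
  sum_eq_zero fun t _ => by simp [Nat.choose_eq_zero_of_lt (show B < B + t + 1 by omega)]

theorem weightedSum_B_zero (M A C D : ℕ) (hM : C < M) :
    weightedSum M A 0 (C + 1) D = (C + 1) * (A + C + D).choose (A + C + 1) := by
  have h := Nat.sum_range_choose_mul_choose_add C (A + D) (A + 1) M hM
  rw [weightedSum, show A + C + D = C + (A + D) by ring, show A + C + 1 = C + (A + 1) by ring, ← h,
    mul_sum]
  refine sum_congr rfl fun t _ => ?_
  rw [zero_add, zero_add, mul_comm (t + 1), ← Nat.add_one_mul_choose_eq]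
  ring_nf

theorem doubleSum_add_eq_weightedSum_add (A D M : ℕ) {B C : ℕ} (hC : C ≤ M) :
    doubleSum A B C D + C * (A + B + C + D - 1).choose (A + C) =
      weightedSum M A B C D + B * (A + B + C + D - 1).choose (B + D) := by
  induction B generalizing C with
  | zero =>
    rcases C with _ | C
    · simp [doubleSum, weightedSum_C_zero]
    · rw [weightedSum_B_zero M A C D hC, show A + 0 + (C + 1) + D - 1 = A + C + D by omega,
        ← add_assoc]
      simp [doubleSum]
  | succ B ihB =>
    induction C with
    | zero => simp [doubleSum_C_zero, weightedSum_C_zero, add_right_comm]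
    | succ C ihC =>
      have h₁ := ihC (by omega)
      have h₂ := ihB hC
      have sym : (A + B + C + D).choose (A + C) = (A + B + C + D).choose (B + D) := by
        rw [show A + B + C + D = A + C + (B + D) by ring, Nat.choose_symm_add]
      rw [show A + (B + 1) + C + D - 1 = A + B + C + D by omega,
        show B + 1 + D = B + D + 1 by ring] at h₁
      rw [show A + B + (C + 1) + D - 1 = A + B + C + D by omega,
        show A + (C + 1) = A + C + 1 by ring] at h₂
      rw [show A + (B + 1) + (C + 1) + D - 1 = A + B + C + D + 1 by omega,
        show A + (C + 1) = A + C + 1 by ring, show B + 1 + D = B + D + 1 by ring,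
        Nat.choose_succ_succ', Nat.choose_succ_succ', doubleSum_succ_succ, weightedSum_succ_succ]
      linear_combination h₁ + h₂ + sym

section Balanced

variable {A B C D : ℕ}

theorem weightedSum_term_telescopes (hAB : A * B = C * D) (u : ℕ) :
    (A + B + C + D) * u * (B + C).choose (B + u) * (A + D).choose (A + u) +
        (A + u + 1) * (B + u + 1) * (B + C).choose (B + u + 1) * (A + D).choose (A + u + 1) =
      (A + u) * (B + u) * (B + C).choose (B + u) * (A + D).choose (A + u) := by
  by_cases hu : u ≤ C ∧ u ≤ D
  · obtain ⟨c, rfl⟩ := Nat.exists_eq_add_of_le hu.1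
    obtain ⟨d, rfl⟩ := Nat.exists_eq_add_of_le hu.2
    have hx := Nat.choose_succ_right_eq (B + (u + c)) (B + u)
    have hy := Nat.choose_succ_right_eq (A + (u + d)) (A + u)
    rw [show B + (u + c) - (B + u) = c by omega] at hx
    rw [show A + (u + d) - (A + u) = d by omega] at hy
    linear_combination ((A + u + 1) * (A + (u + d)).choose (A + u + 1)) * hx
      + ((B + (u + c)).choose (B + u) * c) * hy
      - ((B + (u + c)).choose (B + u) * (A + (u + d)).choose (A + u)) * hAB
  · rcases not_and_or.mp hu with h | h
    · simp [Nat.choose_eq_zero_of_lt (show B + C < B + u by omega),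
        Nat.choose_eq_zero_of_lt (show B + C < B + u + 1 by omega)]
    · simp [Nat.choose_eq_zero_of_lt (show A + D < A + u by omega),
        Nat.choose_eq_zero_of_lt (show A + D < A + u + 1 by omega)]

theorem mul_weightedSum_add (hAB : A * B = C * D) (K : ℕ) :
    (A + B + C + D) * weightedSum K A B C D +
        (A + K + 1) * (B + K + 1) * (B + C).choose (B + K + 1) * (A + D).choose (A + K + 1) =
      (A + 1) * (B + 1) * (B + C).choose (B + 1) * (A + D).choose (A + 1) := by
  induction K with
  | zero => simp [weightedSum]
  | succ K ih =>
    have step := weightedSum_term_telescopes hAB (K + 1)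
    rw [weightedSum, sum_range_succ, ← weightedSum]
    simp only [← add_assoc] at step ⊢
    linear_combination ih + step

theorem mul_mul_choose_pred_eq (hAB : A * B = C * D) :
    (A + B + C + D) * (C * (A + B + C + D - 1).choose (A + C)) =
      (A + B + C + D) * (B * (A + B + C + D - 1).choose (B + D)) := by
  rcases hN : A + B + C + D with _ | n
  · simp
  have hx := Nat.choose_mul_succ_eq n (A + C)
  have hy := Nat.choose_mul_succ_eq n (B + D)
  have sym : (n + 1).choose (A + C) = (n + 1).choose (B + D) := by
    rw [← hN, show A + B + C + D = A + C + (B + D) by ring, Nat.choose_symm_add]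
  rw [show n + 1 - (A + C) = B + D by omega] at hx
  rw [show n + 1 - (B + D) = A + C by omega] at hy
  rw [Nat.add_sub_cancel]
  linear_combination C * hx - B * hy + ((B + D) * C) * sym - (n + 1).choose (B + D) * hAB

theorem mul_doubleSum_of_mul_eq (hAB : A * B = C * D) :
    (A + B + C + D) * doubleSum A B C D = C * D * (A + D).choose A * (C + B).choose C := by
  have key := doubleSum_add_eq_weightedSum_add A D C (B := B) le_rfl
  have tel := mul_weightedSum_add hAB C
  have hx := Nat.choose_succ_right_eq (B + C) B
  have hy := Nat.choose_succ_right_eq (A + D) A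
  rw [Nat.choose_succ_self, mul_zero, zero_mul, add_zero] at tel
  rw [Nat.add_sub_cancel_left] at hx hy
  rw [add_comm C B, ← Nat.choose_symm_add]
  linear_combination (A + B + C + D) * key - mul_mul_choose_pred_eq hAB + tel
    + ((A + 1) * (A + D).choose (A + 1)) * hx + ((B + C).choose B * C) * hy

theorem doubleSum_eq_of_mul_eq (hAB : A * B = C * D) :
    (doubleSum A B C D : ℚ) =
      C * D / (A + B + C + D) * (A + D).choose A * (C + B).choose C := by
  rcases eq_or_ne (A + B + C + D) 0 with hN | hN
  · obtain ⟨rfl, rfl, rfl, rfl⟩ : A = 0 ∧ B = 0 ∧ C = 0 ∧ D = 0 := by omega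
    simp [doubleSum]
  have hN' : (A + B + C + D : ℚ) ≠ 0 := by exact_mod_cast hN
  rw [div_mul_eq_mul_div, div_mul_eq_mul_div, eq_div_iff hN', mul_comm]
  exact_mod_cast mul_doubleSum_of_mul_eq hAB

end Balanced

theorem sum_Icc_Icc_eq_doubleSum (A B C D : ℕ) :
    ∑ a ∈ Icc 1 A, ∑ b ∈ Icc 1 B,
      (A + C - a + b - 1).choose (b - 1) * (D + B + a - b - 1).choose (a - 1) =
        doubleSum A B C D := by
  simp only [doubleSum, ← Ico_add_one_right_eq_Icc, sum_Ico_eq_sum_range, Nat.add_sub_cancel]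
  refine sum_congr rfl fun i hi => sum_congr rfl fun j hj => ?_
  rw [mem_range] at hi hj
  rw [show A + C - (1 + i) + (1 + j) - 1 = C + (A - 1 - i) + j by omega,
    show D + B + (1 + i) - (1 + j) - 1 = D + (B - 1 - j) + i by omega,
    Nat.add_sub_cancel_left, Nat.add_sub_cancel_left]

theorem guo_zeng_corollary1_exchanged_general (m n p q : ℕ) :
    ∑ a ∈ Finset.Icc 1 (p * m), ∑ b ∈ Finset.Icc 1 (q * n),
      ((Nat.choose (p * m + q * m - a + b - 1) (b - 1) : ℚ) *
        (Nat.choose (p * n + q * n + a - b - 1) (a - 1) : ℚ)) =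
    (p * q * m * n : ℚ) / ((p + q) * (m + n)) *
      (Nat.choose (p * m + p * n) (p * m) : ℚ) *
      (Nat.choose (q * m + q * n) (q * m) : ℚ) := by
  have h := doubleSum_eq_of_mul_eq (A := p * m) (B := q * n) (C := q * m) (D := p * n) (by ring)
  rw [← sum_Icc_Icc_eq_doubleSum] at h
  push_cast at h
  rw [h]
  ring

theorem guo_zeng_corollary1_exchanged (m n p q : ℕ) (hm : 0 < m) (hn : 0 < n)
    (hp : 0 < p) (hq : 0 < q) :
    ∑ a ∈ Finset.Icc 1 (p * m), ∑ b ∈ Finset.Icc 1 (q * n),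
      ((Nat.choose (p * m + q * m - a + b - 1) (b - 1) : ℚ) *
        (Nat.choose (p * n + q * n + a - b - 1) (a - 1) : ℚ)) =
    (p * q * m * n : ℚ) / ((p + q) * (m + n)) *
      (Nat.choose (p * m + p * n) (p * m) : ℚ) *
      (Nat.choose (q * m + q * n) (q * m) : ℚ) :=
  guo_zeng_corollary1_exchanged_general m n p q
end

section
/- (Corollary 3) For all positive integers m and n, the identity \(\sum_{a=1}^{m}\sum_{b=1}^{n}\binom{m+n-a-b}{m-a}\frac{(m+n)^{a+b-2}}{m^{a-1}n^{b-1}}=\frac{(m+n)^{m+n-1}}{m^{m-1}n^{n-1}}-\frac{mn}{m+n}\binom{m+n}{m}\) holds (as an identity of rational numbers). -/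
/-!
Put `x = m / (m + n)`, `y = n / (m + n)` and reindex by `i = m - a`, `j = n - b`: the left side
becomes `(m + n) ^ (m + n - 2) / (m ^ (m - 1) * n ^ (n - 1))` times
`S = ∑_{i < m, j < n} C(i + j, i) x ^ i y ^ j`, the expected number of points of
`[0, m) × [0, n)` visited by the lattice walk with steps `(1, 0)`, `(0, 1)` of probabilities
`x`, `y`.
Adding the rectangle row by row, the problem-of-points identity (the two ways of leaving the
rectangle have total probability `1`) gives, for every `x + y = 1`,
`x S = m - y ^ n ∑_{i < m} (m - i) C(n - 1 + i, i) x ^ i`.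
For our `x` the walk has no drift (`n x = m y`), so `(m - i) y C(n - 1 + i, i) x ^ i` is the
difference of `i C(n - 1 + i, i) x ^ i` at `i + 1` and `i`, and the sum collapses to
`m C(m + n - 1, m) x ^ m`.
-/

open Finset

section CommRing

variable {R : Type*} [CommRing R]

theorem sum_range_add_one_choose_mul_pow (y : R) (m k : ℕ) :
    ∑ j ∈ range (k + 1), ((m + 1 + j).choose (m + 1) : R) * y ^ j =
      ∑ j ∈ range (k + 1), ((m + j).choose m : R) * y ^ j +
        y * ∑ j ∈ range k, ((m + 1 + j).choose (m + 1) : R) * y ^ j := by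
  induction k with
  | zero => simp
  | succ k ih =>
    have hp : (m + 1 + (k + 1)).choose (m + 1) =
        (m + (k + 1)).choose m + (m + 1 + k).choose (m + 1) := by
      rw [show m + 1 + (k + 1) = m + 1 + k + 1 by omega, Nat.choose_succ_succ',
        show m + (k + 1) = m + 1 + k by omega]
    rw [sum_range_succ _ (k + 1), sum_range_succ (fun j ↦ ((m + j).choose m : R) * y ^ j) (k + 1),
      hp]
    push_cast
    linear_combination
      ih - y * sum_range_succ (fun j ↦ ((m + 1 + j).choose (m + 1) : R) * y ^ j) k

theorem problem_of_points {x y : R} (hxy : x + y = 1) (m k : ℕ) :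
    x ^ (m + 1) * ∑ j ∈ range (k + 1), ((m + j).choose m : R) * y ^ j +
      y ^ (k + 1) * ∑ i ∈ range (m + 1), ((k + i).choose k : R) * x ^ i = 1 := by
  induction m with
  | zero =>
    simp only [zero_add, add_zero, Nat.choose_zero_right, Nat.cast_one, one_mul, pow_one,
      sum_range_one, Nat.choose_self, pow_zero, mul_one]
    linear_combination (∑ j ∈ range (k + 1), y ^ j) * hxy + mul_neg_geom_sum y (k + 1)
  | succ m ih =>
    have pascal := sum_range_add_one_choose_mul_pow y m k
    have last := sum_range_succ (fun j ↦ ((m + 1 + j).choose (m + 1) : R) * y ^ j) k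
    have symm : ((k + (m + 1)).choose k : R) = ((m + 1 + k).choose (m + 1) : R) := by
      rw [add_comm k, Nat.choose_symm_add]
    rw [sum_range_succ _ (m + 1), symm]
    linear_combination ih + x ^ (m + 1) *
      ((∑ j ∈ range (k + 1), ((m + 1 + j).choose (m + 1) : R) * y ^ j) * hxy + pascal -
        y * last)

theorem mul_sum_sum_choose_mul_pow_eq {x y : R} (hxy : x + y = 1) (m k : ℕ) :
    x * ∑ i ∈ range m, ∑ j ∈ range (k + 1), ((i + j).choose i : R) * x ^ i * y ^ j =
      m - y ^ (k + 1) * ∑ i ∈ range m, ((m : R) - i) * (k + i).choose k * x ^ i := by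
  induction m with
  | zero => simp
  | succ m ih =>
    have weights : ∑ i ∈ range (m + 1), (((m + 1 : ℕ) : R) - i) * (k + i).choose k * x ^ i =
        ∑ i ∈ range m, ((m : R) - i) * (k + i).choose k * x ^ i +
          ∑ i ∈ range (m + 1), ((k + i).choose k : R) * x ^ i := by
      have split (i : ℕ) : (((m + 1 : ℕ) : R) - i) * (k + i).choose k * x ^ i =
          ((m : R) - i) * (k + i).choose k * x ^ i + (k + i).choose k * x ^ i := by
        push_cast
        ring
      simp only [split, sum_add_distrib]
      rw [sum_range_succ (fun i ↦ ((m : R) - i) * (k + i).choose k * x ^ i) m, sub_self,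
        zero_mul, zero_mul, add_zero]
    have row : x * ∑ j ∈ range (k + 1), ((m + j).choose m : R) * x ^ m * y ^ j =
        x ^ (m + 1) * ∑ j ∈ range (k + 1), ((m + j).choose m : R) * y ^ j := by
      rw [mul_sum, mul_sum]
      exact sum_congr rfl fun j _ ↦ by ring
    rw [weights, sum_range_succ, mul_add, row]
    push_cast
    linear_combination ih + problem_of_points hxy m k

theorem sum_range_choose_mul_pow_telescope (x : R) (m k : ℕ) :
    ∑ i ∈ range m, (((k + 1 + i : ℕ) : R) * x - i) * (k + i).choose k * x ^ i =
      m * (k + m).choose k * x ^ m := by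
  induction m with
  | zero => simp
  | succ m ih =>
    have h := Nat.choose_mul_succ_eq (k + m) k
    rw [show k + m + 1 - k = m + 1 by omega] at h
    have hR : ((k + m).choose k : R) * (k + m + 1) = ((k + m + 1).choose k : R) * (m + 1) := by
      simpa using congrArg (Nat.cast (R := R)) h
    rw [sum_range_succ, ih, show k + (m + 1) = k + m + 1 by omega]
    push_cast
    linear_combination x ^ (m + 1) * hR

theorem mul_sum_sum_choose_mul_pow_eq_of_balanced {x y : R} (hxy : x + y = 1) {m k : ℕ}
    (hbal : (k + 1 : R) * x = m * y) :
    x * ∑ i ∈ range m, ∑ j ∈ range (k + 1), ((i + j).choose i : R) * x ^ i * y ^ j =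
      m * (1 - (k + m).choose k * x ^ m * y ^ k) := by
  have hP : y * ∑ i ∈ range m, ((m : R) - i) * (k + i).choose k * x ^ i =
      m * (k + m).choose k * x ^ m := by
    rw [← sum_range_choose_mul_pow_telescope x m k, mul_sum]
    refine sum_congr rfl fun i _ ↦ ?_
    push_cast
    linear_combination (-((k + i).choose k : R) * x ^ i) * (hbal + i * hxy)
  rw [mul_sum_sum_choose_mul_pow_eq hxy, pow_succ, mul_assoc, hP]
  ring

end CommRing

theorem sum_Icc_one_sub_eq_sum_range {M : Type*} [AddCommMonoid M] (f : ℕ → M) (m : ℕ) :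
    ∑ a ∈ Icc 1 m, f (m - a) = ∑ i ∈ range m, f i := by
  refine sum_nbij' (m - ·) (m - ·) ?_ ?_ ?_ ?_ fun a ha ↦ rfl <;> intro a ha <;>
    simp only [mem_Icc, mem_range] at ha ⊢ <;> omega

theorem sum_Icc_sum_Icc_sub_eq {M : Type*} [AddCommMonoid M] (f : ℕ → ℕ → M) (m n : ℕ) :
    ∑ a ∈ Icc 1 m, ∑ b ∈ Icc 1 n, f (m - a) (n - b) =
      ∑ i ∈ range m, ∑ j ∈ range n, f i j := by
  simp only [sum_Icc_one_sub_eq_sum_range (f _), sum_Icc_one_sub_eq_sum_range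
    (fun i ↦ ∑ j ∈ range n, f i j)]

theorem choose_mul_div_pow_eq_mul_choose_mul_div_pow {m n a b : ℕ} (ha : a ∈ Icc 1 m)
    (hb : b ∈ Icc 1 n) :
    ((m + n - a - b).choose (m - a) : ℚ) *
        ((m + n : ℚ) ^ (a + b - 2) / ((m : ℚ) ^ (a - 1) * (n : ℚ) ^ (b - 1))) =
      (m + n : ℚ) ^ (m + n - 2) / ((m : ℚ) ^ (m - 1) * (n : ℚ) ^ (n - 1)) *
        (((m - a + (n - b)).choose (m - a) : ℚ) * (m / (m + n) : ℚ) ^ (m - a) *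
          (n / (m + n) : ℚ) ^ (n - b)) := by
  obtain ⟨ha1, ham⟩ := mem_Icc.1 ha
  obtain ⟨hb1, hbn⟩ := mem_Icc.1 hb
  obtain ⟨a, rfl⟩ := Nat.exists_eq_add_one.2 ha1
  obtain ⟨b, rfl⟩ := Nat.exists_eq_add_one.2 hb1
  obtain ⟨i, rfl⟩ := Nat.exists_eq_add_of_le ham
  obtain ⟨j, rfl⟩ := Nat.exists_eq_add_of_le hbn
  rw [show a + 1 + i + (b + 1 + j) - (a + 1) - (b + 1) = i + j by omega,
    show a + 1 + i - (a + 1) = i by omega, show b + 1 + j - (b + 1) = j by omega,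
    show a + 1 + (b + 1) - 2 = a + b by omega,
    show a + 1 + i + (b + 1 + j) - 2 = a + i + (b + j) by omega,
    Nat.add_sub_cancel, Nat.add_sub_cancel, show a + 1 + i - 1 = a + i by omega,
    show b + 1 + j - 1 = b + j by omega]
  have hN : (((a + 1 + i : ℕ) : ℚ) + ((b + 1 + j : ℕ) : ℚ)) ≠ 0 := by positivity
  rw [div_pow, div_pow]
  field_simp
  ring

theorem sum_sum_choose_mul_div_pow_eq {K : Type*} [Field K] [CharZero K] {m n : ℕ} (hm : 0 < m)
    (hn : 0 < n) :
    ∑ i ∈ range m, ∑ j ∈ range n, ((i + j).choose i : K) * (m / (m + n) : K) ^ i *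
        (n / (m + n) : K) ^ j =
      (m + n) *
        (1 - (m + n - 1).choose m * (m / (m + n) : K) ^ m * (n / (m + n) : K) ^ (n - 1)) := by
  obtain ⟨k, rfl⟩ := Nat.exists_eq_add_one.2 hn
  have hN : (m + (k + 1 : ℕ) : K) ≠ 0 := by norm_cast
  have hx : (m / (m + (k + 1 : ℕ)) : K) ≠ 0 := div_ne_zero (by exact_mod_cast hm.ne') hN
  have key := mul_sum_sum_choose_mul_pow_eq_of_balanced (x := (m / (m + (k + 1 : ℕ)) : K))
    (y := ((k + 1 : ℕ) / (m + (k + 1 : ℕ)) : K)) (m := m) (k := k) (by field_simp)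
    (by field_simp; push_cast; ring)
  rw [Nat.choose_symm_add] at key
  rw [← mul_right_inj' hx, key, Nat.add_sub_cancel, show m + (k + 1) - 1 = k + m by omega]
  field_simp

theorem guo_zeng_corollary3 (m n : ℕ) (hm : 0 < m) (hn : 0 < n) :
    ∑ a ∈ Finset.Icc 1 m, ∑ b ∈ Finset.Icc 1 n,
      (Nat.choose (m + n - a - b) (m - a) : ℚ) *
        ((m + n : ℚ) ^ (a + b - 2) / ((m : ℚ) ^ (a - 1) * (n : ℚ) ^ (b - 1))) =
    (m + n : ℚ) ^ (m + n - 1) / ((m : ℚ) ^ (m - 1) * (n : ℚ) ^ (n - 1)) -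
    (m * n : ℚ) / (m + n) * (Nat.choose (m + n) m : ℚ) := by
  rw [sum_congr rfl fun a ha ↦ sum_congr rfl fun b hb ↦
    choose_mul_div_pow_eq_mul_choose_mul_div_pow ha hb]
  simp only [← mul_sum]
  rw [sum_Icc_sum_Icc_sub_eq (fun i j ↦ ((i + j).choose i : ℚ) * (m / (m + n) : ℚ) ^ i *
    (n / (m + n) : ℚ) ^ j), sum_sum_choose_mul_div_pow_eq hm hn]
  obtain ⟨μ, rfl⟩ := Nat.exists_eq_add_one.2 hm
  obtain ⟨k, rfl⟩ := Nat.exists_eq_add_one.2 hn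
  have hC := Nat.choose_mul_succ_eq (μ + 1 + k) (μ + 1)
  rw [show μ + 1 + k + 1 - (μ + 1) = k + 1 by omega] at hC
  rw [show μ + 1 + (k + 1) - 2 = μ + k by omega, show μ + 1 + (k + 1) - 1 = μ + 1 + k by omega,
    Nat.add_sub_cancel, Nat.add_sub_cancel, div_pow, div_pow]
  have hCq : ((μ + 1 + k).choose (μ + 1) : ℚ) * (μ + 1 + k + 1) =
      ((μ + 1 + (k + 1)).choose (μ + 1) : ℚ) * (k + 1) := by exact_mod_cast hC
  push_cast
  field_simp
  linear_combination
    (-(μ + 1 : ℚ) ^ (μ + 1) * (k + 1) ^ k * (μ + 1 + (k + 1)) ^ (μ + k + 1)) * hCq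
end

section
/- (Corollary 4) For all positive integers m, n, p, q, and r, the identity \(\sum_{a=1}^{pm-r}\sum_{b=1}^{qn-r}\binom{pm+qm-a+b-1}{pm-r-a}\binom{pn+qn+a-b-1}{qn-r-b}+\sum_{a=1}^{pn-r}\sum_{b=1}^{qm-r}\binom{pn+qn-a+b-1}{pn-r-a}\binom{pm+qm+a-b-1}{qm-r-b}=\frac{2pqmn}{(p+q)(m+n)}\binom{pm+qm}{pm}\binom{pn+qn}{pn}-r\binom{(p+q)(m+n)}{pm+pn}+\sum_{k=1-r}^{r-1}(r-|k|)\binom{pm+qm}{pm-k}\binom{pn+qn}{qn-k}\) holds (as an identity of rational numbers), where k ranges over integers, sums over empty ranges are 0, and a binomial coefficient with negative lower index is 0. -/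
/-- Binomial coefficient with natural upper index and integer lower index,
equal to `0` when the lower index is negative. -/
def chooseZ (N : ℕ) (k : ℤ) : ℕ :=
  if k < 0 then 0 else N.choose k.toNat

/-!
Write `a = pm`, `b = qm`, `c = pn`, `d = qn`, so that `ad = bc`. Substituting `i = a - r - x`,
`j = d - r - y`, the first double sum becomes `∑_{i<s, j<t} C(u+i+t-1-j, i) C(v+s-1-i+j, j)` with
`u = b + r`, `v = c + r`, `s = a - r`, `t = d - r`. Like `∑_k k C(u+s, u+k) C(v+t, v+k)` it obeys
Pascal's rule in `(u, s)`, and at `u = 0` both equal `s C(v+s+t-1, t-1)` by the Chu–Vandermonde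
identity and its upper-index version. Hence, with `D(k) = C(a+b, a-k) C(c+d, d-k)`, the two double
sums are `∑_{k ≥ r} (k - r) D(k)` and `∑_{k ≥ r} (k - r) D(-k)`. Because `ad = bc`, the
one-sided first moments of `D` telescope, `∑_k D(k) = C(a+b+c+d, a+c)` is Vandermonde, and the
terms with `|k| < r` give the remaining sum.
-/

open Finset

@[simp]
theorem chooseZ_natCast (N j : ℕ) : chooseZ N j = N.choose j := by
  simp [chooseZ]

theorem chooseZ_of_neg {N : ℕ} {k : ℤ} (hk : k < 0) : chooseZ N k = 0 := if_pos hk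

theorem chooseZ_add_sub_left (a b j : ℕ) : chooseZ (a + b) (a - j) = (a + b).choose (b + j) := by
  rcases le_or_gt j a with h | h
  · rw [show (a : ℤ) - j = ((a - j : ℕ) : ℤ) by omega, chooseZ_natCast,
      Nat.choose_symm_of_eq_add (show a + b = (a - j) + (b + j) by omega)]
  · rw [chooseZ_of_neg (by omega), Nat.choose_eq_zero_of_lt (by omega)]

theorem chooseZ_add_sub_right (a b j : ℕ) : chooseZ (a + b) (b - j) = (a + b).choose (a + j) := by
  rw [add_comm a b, chooseZ_add_sub_left]

theorem sum_Icc_symm_add_apply_zero {M : Type*} [AddCommMonoid M] (g : ℤ → M) {n : ℕ}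
    (hn : 0 < n) :
    ∑ k ∈ Icc (1 - n : ℤ) (n - 1), g k + g 0 =
      ∑ j ∈ range n, g j + ∑ j ∈ range n, g (-j) := by
  have hunion : Icc (1 - n : ℤ) (n - 1) =
      (range n).image (fun j : ℕ => (j : ℤ)) ∪
        (range n).image (fun j : ℕ => -(j : ℤ)) := by
    ext k
    simp only [mem_Icc, mem_union, mem_image, mem_range]
    constructor
    · intro hk
      rcases le_or_gt 0 k with h | h
      · exact Or.inl ⟨k.toNat, by omega, by omega⟩
      · exact Or.inr ⟨(-k).toNat, by omega, by omega⟩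
    · rintro (⟨j, hj, rfl⟩ | ⟨j, hj, rfl⟩) <;> omega
  have hinter : (range n).image (fun j : ℕ => (j : ℤ)) ∩
      (range n).image (fun j : ℕ => -(j : ℤ)) = {0} := by
    ext k
    simp only [mem_inter, mem_image, mem_range, mem_singleton]
    constructor
    · rintro ⟨⟨i, -, rfl⟩, ⟨j, -, h⟩⟩
      omega
    · rintro rfl
      exact ⟨⟨0, hn, rfl⟩, ⟨0, hn, rfl⟩⟩
  rw [hunion, ← sum_singleton g 0, ← hinter, sum_union_inter,
    sum_image fun i _ j _ h => by exact_mod_cast h,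
    sum_image fun i _ j _ h => by simpa using h]

theorem sum_chooseZ_mul_chooseZ (M N a c : ℕ) {S : Finset ℤ} (hS : Icc (-(c : ℤ)) a ⊆ S) :
    ∑ k ∈ S, chooseZ M (a - k) * chooseZ N (c + k) = (M + N).choose (a + c) := by
  rw [← sum_subset hS fun k _ hk => ?_, Nat.add_choose_eq]
  · refine sum_nbij' (fun k => ((a - k).toNat, (c + k).toNat)) (fun ij => (a : ℤ) - ij.1)
      ?_ ?_ ?_ ?_ ?_
    · intro k hk
      simp only [mem_Icc, HasAntidiagonal.mem_antidiagonal] at hk ⊢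
      omega
    · intro ij hij
      simp only [mem_Icc, HasAntidiagonal.mem_antidiagonal] at hij ⊢
      omega
    · intro k hk
      simp only [mem_Icc] at hk
      omega
    · intro ij hij
      simp only [HasAntidiagonal.mem_antidiagonal] at hij
      ext
      · simp
      · simp only
        omega
    · intro k hk
      simp only [mem_Icc] at hk
      simp [chooseZ, show ¬((a : ℤ) - k < 0) by omega, show ¬((c : ℤ) + k < 0) by omega]
  · simp only [mem_Icc, not_and_or, not_le] at hk
    rcases hk with hk | hk
    · rw [chooseZ_of_neg (N := N) (by omega), mul_zero]
    · rw [chooseZ_of_neg (N := M) (by omega), zero_mul]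

theorem Finset.sum_Icc_one_eq_sum_range_sub {M : Type*} [AddCommMonoid M] (f : ℕ → M)
    (s : ℕ) :
    ∑ a ∈ Icc 1 s, f a = ∑ i ∈ range s, f (s - i) := by
  rw [← Finset.Ico_add_one_right_eq_Icc, sum_Ico_eq_sum_range, ← sum_range_reflect]
  refine sum_congr rfl fun i hi => ?_
  rw [mem_range] at hi
  congr 1
  omega

theorem Finset.sum_range_mul_apply_add_eq {R : Type*} [CommRing R] (f : ℕ → R) (r L : ℕ) :
    ∑ k ∈ range L, (k : R) * f (r + k) =
      ∑ j ∈ range (r + L), (j : R) * f j - r * ∑ j ∈ range (r + L), f j +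
        ∑ j ∈ range r, ((r : R) - j) * f j := by
  have h := sum_range_add (fun j => ((j : R) - r) * f j) r L
  simp only [Nat.cast_add, add_sub_cancel_left, sub_mul, sum_sub_distrib, ← mul_sum] at h ⊢
  linear_combination -h

theorem Nat.sum_range_add_choose_mul_add_choose (e f n : ℕ) :
    ∑ k ∈ range (n + 1), (e + k).choose k * (f + (n - k)).choose (n - k) =
      (e + f + n + 1).choose n := by
  -- Chu–Vandermonde at the negative upper indices `-(e+1)` and `-(f+1)`.
  have neg_choose : ∀ a i : ℕ,
      Ring.choose (-((a : ℤ) + 1)) i = (-1) ^ i * ((a + i).choose i : ℤ) := by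
    intro a i
    rw [Ring.choose_neg, show (a : ℤ) + 1 + i - 1 = ((a + i : ℕ) : ℤ) by push_cast; ring,
      Ring.choose_natCast, Units.smul_def, Int.coe_negOnePow_natCast, smul_eq_mul]
  have h := Ring.add_choose_eq n (Commute.all (-((e : ℤ) + 1)) (-((f : ℤ) + 1)))
  rw [show -((e : ℤ) + 1) + -((f : ℤ) + 1) = -(((e + f + 1 : ℕ) : ℤ) + 1) by
      push_cast; ring,
    neg_choose] at h
  simp_rw [neg_choose] at h
  rw [sum_congr rfl fun ij hij => by
      rw [mul_mul_mul_comm, ← pow_add, HasAntidiagonal.mem_antidiagonal.mp hij],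
    ← mul_sum,
    Nat.sum_antidiagonal_eq_sum_range_succ (fun i j => ((e + i).choose i : ℤ) * (f + j).choose j)]
    at h
  have := mul_left_cancel₀ (pow_ne_zero n (by norm_num : (-1 : ℤ) ≠ 0)) h
  rw [show e + f + 1 + n = e + f + n + 1 by ring] at this
  exact_mod_cast this.symm

theorem Nat.sum_range_choose_mul_choose_add_s12 (m n c : ℕ) :
    ∑ k ∈ range (m + 1), m.choose k * n.choose (c + k) = (m + n).choose (m + c) := by
  rw [Nat.add_choose_eq, Nat.sum_antidiagonal_eq_sum_range_succ_mk,
    show (m + c).succ = (m + 1) + c by omega, sum_range_add _ (m + 1) c,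
    sum_eq_zero (s := range c) fun j _ => by rw [Nat.choose_eq_zero_of_lt (by omega), zero_mul],
    add_zero, ← sum_range_reflect]
  refine sum_congr rfl fun k hk => ?_
  rw [mem_range] at hk
  rw [show m + 1 - 1 - k = m - k by omega, Nat.choose_symm (by omega),
    show c + (m - k) = m + c - k by omega]

theorem Nat.sum_range_choose_mul_choose_add_sum_range (a b c d L : ℕ) (ha : a < L) (hc : c < L) :
    ∑ j ∈ range L, (a + b).choose (b + j) * (c + d).choose (c + j) +
      ∑ j ∈ range L, (c + d).choose (d + j) * (a + b).choose (a + j) =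
    (a + b + c + d).choose (a + c) + (a + b).choose a * (c + d).choose c := by
  have hV := sum_chooseZ_mul_chooseZ (a + b) (c + d) a c (S := Icc (1 - L : ℤ) (L - 1))
    fun k hk => by simp only [mem_Icc] at hk ⊢; omega
  have hB := sum_Icc_symm_add_apply_zero
    (fun k : ℤ => chooseZ (a + b) (a - k) * chooseZ (c + d) (c + k)) (by omega : 0 < L)
  rw [hV, ← add_assoc] at hB
  simp only [sub_zero, add_zero, sub_neg_eq_add, ← sub_eq_add_neg, chooseZ_add_sub_left,
    ← Nat.cast_add, chooseZ_natCast] at hB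
  rw [hB]
  congr 1
  exact sum_congr rfl fun j _ => mul_comm _ _

-- `(b + k) (c + k) C(a+b, b+k) C(c+d, c+k)` drops by `(a + b + c + d) k C(a+b, b+k) C(c+d, c+k)`
-- from `k` to `k + 1`, because `ad = bc`.
theorem Nat.add_mul_add_mul_choose_mul_choose_eq {a b c d : ℕ} (had : a * d = b * c) (k : ℕ) :
    (b + k) * (c + k) * ((a + b).choose (b + k) * (c + d).choose (c + k)) =
      (a + b + c + d) * (k * ((a + b).choose (b + k) * (c + d).choose (c + k))) +
        (b + (k + 1)) * (c + (k + 1)) *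
          ((a + b).choose (b + (k + 1)) * (c + d).choose (c + (k + 1))) := by
  have h1 := Nat.choose_succ_right_eq (a + b) (b + k)
  have h2 := Nat.choose_succ_right_eq (c + d) (c + k)
  rw [show a + b - (b + k) = a - k by omega] at h1
  rw [show c + d - (c + k) = d - k by omega] at h2
  have ratio : (b + (k + 1)) * (c + (k + 1)) *
      ((a + b).choose (b + (k + 1)) * (c + d).choose (c + (k + 1))) =
        (a - k) * (d - k) * ((a + b).choose (b + k) * (c + d).choose (c + k)) := by
    simp only [← add_assoc]
    calc (b + k + 1) * (c + k + 1) * ((a + b).choose (b + k + 1) * (c + d).choose (c + k + 1))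
        = ((a + b).choose (b + k + 1) * (b + k + 1)) *
            ((c + d).choose (c + k + 1) * (c + k + 1)) := by ring
      _ = (a - k) * (d - k) * ((a + b).choose (b + k) * (c + d).choose (c + k)) := by
          rw [h1, h2]; ring
  rw [ratio]
  by_cases hk : k ≤ a ∧ k ≤ d
  · obtain ⟨a', rfl⟩ := Nat.exists_eq_add_of_le hk.1
    obtain ⟨d', rfl⟩ := Nat.exists_eq_add_of_le hk.2
    rw [Nat.add_sub_cancel_left, Nat.add_sub_cancel_left,
      show (b + k) * (c + k) = (k + a' + b + c + (k + d')) * k + a' * d' by nlinarith]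
    ring
  · rcases not_and_or.mp hk with hk | hk
    · simp [Nat.choose_eq_zero_of_lt (show a + b < b + k by omega)]
    · simp [Nat.choose_eq_zero_of_lt (show c + d < c + k by omega)]

theorem Nat.add_mul_sum_range_mul_choose_mul_choose {a b c d K : ℕ} (had : a * d = b * c)
    (hK : a < K) :
    (a + b + c + d) * ∑ k ∈ range K, k * ((a + b).choose (b + k) * (c + d).choose (c + k)) =
      b * c * ((a + b).choose b * (c + d).choose c) := by
  have telescope (n : ℕ) :
      (a + b + c + d) * ∑ k ∈ range n, k * ((a + b).choose (b + k) * (c + d).choose (c + k)) +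
          (b + n) * (c + n) * ((a + b).choose (b + n) * (c + d).choose (c + n)) =
        b * c * ((a + b).choose b * (c + d).choose c) := by
    induction n with
    | zero => simp
    | succ n ih =>
      rw [sum_range_succ, mul_add, add_assoc, ← Nat.add_mul_add_mul_choose_mul_choose_eq had, ih]
  simpa [Nat.choose_eq_zero_of_lt (show a + b < b + K by omega)] using telescope K

namespace GuoZeng

def doubleSum (u v s t : ℕ) : ℕ :=
  ∑ i ∈ range s, ∑ j ∈ range t,
    (u + i + (t - 1 - j)).choose i * (v + (s - 1 - i) + j).choose j

-- `C(u+s, u+k)` is `C(u+s, s-k)` written so that it vanishes for `k > s` without truncated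
-- subtraction.
def momentSum (u v s t : ℕ) : ℕ :=
  ∑ k ∈ range (s + 1), k * (u + s).choose (u + k) * (v + t).choose (v + k)

theorem doubleSum_succ (u v s t : ℕ) :
    doubleSum u v (s + 1) t =
      ∑ i ∈ range s, ∑ j ∈ range t,
        (u + (i + 1) + (t - 1 - j)).choose (i + 1) * (v + (s - 1 - i) + j).choose j +
      ∑ j ∈ range t, (v + s + j).choose j := by
  rw [doubleSum, sum_range_succ']
  congr 1
  · refine sum_congr rfl fun i _ => sum_congr rfl fun j _ => ?_
    rw [show s + 1 - 1 - (i + 1) = s - 1 - i by omega]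
  · simp

theorem doubleSum_succ_succ (u v s t : ℕ) :
    doubleSum (u + 1) v (s + 1) t = doubleSum u v (s + 1) t + doubleSum (u + 1) v s t := by
  rw [doubleSum_succ, doubleSum_succ, doubleSum, add_right_comm, ← sum_add_distrib]
  congr 1
  refine sum_congr rfl fun i _ => ?_
  rw [← sum_add_distrib]
  refine sum_congr rfl fun j _ => ?_
  rw [show u + 1 + (i + 1) + (t - 1 - j) = (u + 1 + i + (t - 1 - j)) + 1 by ring,
    Nat.choose_succ_succ', show u + 1 + i + (t - 1 - j) = u + (i + 1) + (t - 1 - j) by ring]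
  ring

theorem momentSum_succ_succ (u v s t : ℕ) :
    momentSum (u + 1) v (s + 1) t = momentSum u v (s + 1) t + momentSum (u + 1) v s t := by
  have hlast :
      (s + 1) * (u + 1 + s).choose (u + 1 + (s + 1)) * (v + t).choose (v + (s + 1)) = 0 := by
    rw [Nat.choose_eq_zero_of_lt (by omega), mul_zero, zero_mul]
  rw [momentSum, momentSum, momentSum, ← add_zero (∑ k ∈ range (s + 1), _), ← hlast,
    ← sum_range_succ, ← sum_add_distrib]
  refine sum_congr rfl fun k _ => ?_
  rw [show u + 1 + (s + 1) = (u + (s + 1)) + 1 by ring, show u + 1 + k = (u + k) + 1 by ring,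
    Nat.choose_succ_succ', show u + (s + 1) = u + 1 + s by ring]
  ring

theorem doubleSum_zero_left (v s t : ℕ) :
    doubleSum 0 v s (t + 1) = s * (v + s + t).choose t := by
  rw [doubleSum, sum_congr rfl fun i hi => ?_, sum_const, card_range, smul_eq_mul]
  rw [mem_range] at hi
  rw [show v + s + t = v + (s - 1 - i) + i + t + 1 by omega,
    ← Nat.sum_range_add_choose_mul_add_choose (v + (s - 1 - i)) i t]
  refine sum_congr rfl fun j hj => ?_
  rw [mem_range] at hj
  rw [show 0 + i + (t + 1 - 1 - j) = i + (t - j) by omega, Nat.choose_symm_add, mul_comm]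

theorem momentSum_zero_left (v s t : ℕ) :
    momentSum 0 v s (t + 1) = s * (v + s + t).choose t := by
  cases s with
  | zero => simp [momentSum]
  | succ s =>
    rw [momentSum, sum_range_succ', zero_mul, zero_mul, add_zero,
      Nat.choose_symm_of_eq_add (show v + (s + 1) + t = t + (s + (v + 1)) by ring),
      show v + (s + 1) + t = s + (v + (t + 1)) by ring,
      ← Nat.sum_range_choose_mul_choose_add_s12 s (v + (t + 1)) (v + 1), mul_sum]
    refine sum_congr rfl fun k _ => ?_
    rw [show 0 + (s + 1) = s + 1 by ring, show 0 + (k + 1) = k + 1 by ring,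
      show v + 1 + k = v + (k + 1) by ring, mul_comm (k + 1), ← Nat.add_one_mul_choose_eq]
    ring

theorem doubleSum_eq_momentSum (u v s t : ℕ) : doubleSum u v s t = momentSum u v s t := by
  induction u generalizing s with
  | zero =>
    cases t with
    | zero =>
      rw [doubleSum, momentSum, range_zero]
      simp only [sum_empty, sum_const_zero]
      refine (sum_eq_zero fun k _ => ?_).symm
      rcases Nat.eq_zero_or_pos k with rfl | hk
      · rw [zero_mul, zero_mul]
      · rw [Nat.choose_eq_zero_of_lt (show v + 0 < v + k by omega), mul_zero]
    | succ t => rw [doubleSum_zero_left, momentSum_zero_left]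
  | succ u ihu =>
    induction s with
    | zero => simp [doubleSum, momentSum]
    | succ s ihs => rw [doubleSum_succ_succ, momentSum_succ_succ, ihu, ihs]

theorem sum_Icc_sum_Icc_choose_mul_choose (x y z w r K : ℕ) (hK : x < r + K) :
    ∑ a ∈ Icc 1 (x - r), ∑ b ∈ Icc 1 (w - r),
      (x + y - a + b - 1).choose (x - r - a) * (z + w + a - b - 1).choose (w - r - b) =
    ∑ k ∈ range K, k * ((x + y).choose (y + (r + k)) * (z + w).choose (z + (r + k))) := by
  by_cases hrxw : r ≤ x ∧ r ≤ w
  · obtain ⟨s, rfl⟩ := Nat.exists_eq_add_of_le hrxw.1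
    obtain ⟨t, rfl⟩ := Nat.exists_eq_add_of_le hrxw.2
    have hdouble : ∑ a ∈ Icc 1 (r + s - r), ∑ b ∈ Icc 1 (r + t - r),
        (r + s + y - a + b - 1).choose (r + s - r - a) *
          (z + (r + t) + a - b - 1).choose (r + t - r - b) = doubleSum (y + r) (z + r) s t := by
      rw [Nat.add_sub_cancel_left, Nat.add_sub_cancel_left, sum_Icc_one_eq_sum_range_sub,
        doubleSum]
      refine sum_congr rfl fun i hi => ?_
      rw [sum_Icc_one_eq_sum_range_sub]
      refine sum_congr rfl fun j hj => ?_
      rw [mem_range] at hi hj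
      congr 2 <;> omega
    rw [hdouble, doubleSum_eq_momentSum, momentSum,
      ← sum_subset (range_subset_range.2 (show s + 1 ≤ K by omega)) fun k _ hk => ?_]
    · exact sum_congr rfl fun k _ => by ring_nf
    · rw [mem_range, not_lt] at hk
      rw [Nat.choose_eq_zero_of_lt (by omega), zero_mul, mul_zero]
  · trans 0
    · rcases not_and_or.mp hrxw with h | h
      · rw [Icc_eq_empty (by omega), sum_empty]
      · exact sum_eq_zero fun a _ => by rw [Icc_eq_empty (by omega), sum_empty]
    · refine (sum_eq_zero fun k _ => ?_).symm
      rcases not_and_or.mp hrxw with h | h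
      · rw [Nat.choose_eq_zero_of_lt (show x + y < y + (r + k) by omega), zero_mul, mul_zero]
      · rw [Nat.choose_eq_zero_of_lt (show z + w < z + (r + k) by omega), mul_zero, mul_zero]

theorem sum_Icc_sum_Icc_eq (a b c d r L : ℕ) (had : a * d = b * c) (hpos : 0 < a + b + c + d)
    (hL : a < r + L) :
    ∑ x ∈ Icc 1 (a - r), ∑ y ∈ Icc 1 (d - r),
        ((a + b - x + y - 1).choose (a - r - x) : ℚ) *
          ((c + d + x - y - 1).choose (d - r - y) : ℚ) =
      b * c / (a + b + c + d) * ((a + b).choose b * (c + d).choose c : ℚ) -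
        r * ∑ j ∈ range (r + L), ((a + b).choose (b + j) * (c + d).choose (c + j) : ℚ) +
        ∑ j ∈ range r,
          ((r : ℚ) - j) * ((a + b).choose (b + j) * (c + d).choose (c + j) : ℚ) := by
  have hpiece := sum_Icc_sum_Icc_choose_mul_choose a b c d r L hL
  have hmoment := Nat.add_mul_sum_range_mul_choose_mul_choose had hL
  apply_fun ((↑) : ℕ → ℚ) at hpiece hmoment
  push_cast at hpiece hmoment
  have hmean :
      ∑ j ∈ range (r + L), (j : ℚ) * ((a + b).choose (b + j) * (c + d).choose (c + j)) =
        b * c * ((a + b).choose b * (c + d).choose c) / (a + b + c + d) := by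
    rw [eq_div_iff (by exact_mod_cast hpos.ne'), mul_comm, hmoment]
  rw [hpiece, sum_range_mul_apply_add_eq
    (fun j => ((a + b).choose (b + j) * (c + d).choose (c + j) : ℚ)), hmean]
  ring

theorem sum_Icc_sub_abs_mul_chooseZ_mul_chooseZ (a b c d r : ℕ) (hr : 0 < r) :
    ∑ k ∈ Icc (1 - r : ℤ) (r - 1),
        ((r : ℚ) - |(k : ℚ)|) * (chooseZ (a + b) (a - k) : ℚ) *
          (chooseZ (c + d) (d - k) : ℚ) +
      r * ((a + b).choose a * (c + d).choose d : ℚ) =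
    ∑ j ∈ range r, ((r : ℚ) - j) * ((a + b).choose (b + j) * (c + d).choose (c + j) : ℚ) +
      ∑ j ∈ range r,
        ((r : ℚ) - j) * ((c + d).choose (d + j) * (a + b).choose (a + j) : ℚ) := by
  have hB := sum_Icc_symm_add_apply_zero (fun k : ℤ =>
    ((r : ℚ) - |(k : ℚ)|) * (chooseZ (a + b) (a - k) : ℚ) *
      (chooseZ (c + d) (d - k) : ℚ)) hr
  simp only [Int.cast_zero, abs_zero, sub_zero, Int.cast_natCast, Nat.abs_cast, Int.cast_neg,
    abs_neg, sub_neg_eq_add, ← Nat.cast_add, chooseZ_natCast, chooseZ_add_sub_left,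
    chooseZ_add_sub_right] at hB
  rw [← mul_assoc, hB]
  congr 1 <;> exact sum_congr rfl fun j _ => by ring

theorem sum_Icc_sum_Icc_add_sum_Icc_sum_Icc_eq (a b c d r : ℕ) (had : a * d = b * c)
    (hpos : 0 < a + b + c + d) (hr : 0 < r) :
    (∑ x ∈ Icc 1 (a - r), ∑ y ∈ Icc 1 (d - r),
      ((a + b - x + y - 1).choose (a - r - x) : ℚ) *
        ((c + d + x - y - 1).choose (d - r - y) : ℚ)) +
    (∑ x ∈ Icc 1 (c - r), ∑ y ∈ Icc 1 (b - r),
      ((c + d - x + y - 1).choose (c - r - x) : ℚ) *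
        ((a + b + x - y - 1).choose (b - r - y) : ℚ)) =
    2 * (a * d : ℚ) / (a + b + c + d) * (a + b).choose a * (c + d).choose c -
      r * (a + b + c + d).choose (a + c) +
    ∑ k ∈ Icc (1 - r : ℤ) (r - 1),
      ((r : ℚ) - |(k : ℚ)|) * (chooseZ (a + b) (a - k) : ℚ) *
        (chooseZ (c + d) (d - k) : ℚ) := by
  have hda : c * b = d * a := by rw [mul_comm c, mul_comm d, had]
  rw [sum_Icc_sum_Icc_eq a b c d r (a + b + c + d) had hpos (by omega),
    sum_Icc_sum_Icc_eq c d a b r (a + b + c + d) hda (by omega) (by omega)]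
  have hX : (a + b).choose b = (a + b).choose a := Nat.choose_symm_add.symm
  have hY : (c + d).choose d = (c + d).choose c := Nat.choose_symm_add.symm
  rw [hX, hY]
  have hV := Nat.sum_range_choose_mul_choose_add_sum_range a b c d (r + (a + b + c + d))
    (by omega) (by omega)
  apply_fun ((↑) : ℕ → ℚ) at hV
  push_cast at hV
  have hZ := sum_Icc_sub_abs_mul_chooseZ_mul_chooseZ a b c d r hr
  rw [hY] at hZ
  have had' : (a * d : ℚ) = b * c := by exact_mod_cast had
  linear_combination (-(r : ℚ)) * hV - hZ -
    ((a + b).choose a * (c + d).choose c / (a + b + c + d) : ℚ) * had'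

end GuoZeng

theorem guo_zeng_corollary4_general (m n p q r : ℕ) (hm : 0 < m)
    (hp : 0 < p) (hr : 0 < r) :
    (∑ a ∈ Finset.Icc 1 (p * m - r), ∑ b ∈ Finset.Icc 1 (q * n - r),
      ((Nat.choose (p * m + q * m - a + b - 1) (p * m - r - a) : ℚ) *
        (Nat.choose (p * n + q * n + a - b - 1) (q * n - r - b) : ℚ))) +
    (∑ a ∈ Finset.Icc 1 (p * n - r), ∑ b ∈ Finset.Icc 1 (q * m - r),
      ((Nat.choose (p * n + q * n - a + b - 1) (p * n - r - a) : ℚ) *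
        (Nat.choose (p * m + q * m + a - b - 1) (q * m - r - b) : ℚ))) =
    2 * (p * q * m * n : ℚ) / ((p + q) * (m + n)) *
      (Nat.choose (p * m + q * m) (p * m) : ℚ) *
      (Nat.choose (p * n + q * n) (p * n) : ℚ) -
    (r : ℚ) * (Nat.choose ((p + q) * (m + n)) (p * m + p * n) : ℚ) +
    ∑ k ∈ Finset.Icc (1 - (r : ℤ)) ((r : ℤ) - 1),
      ((r : ℚ) - |(k : ℚ)|) * (chooseZ (p * m + q * m) ((p * m : ℤ) - k) : ℚ) *
        (chooseZ (p * n + q * n) ((q * n : ℤ) - k) : ℚ) := by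
  rw [GuoZeng.sum_Icc_sum_Icc_add_sum_Icc_sum_Icc_eq (p * m) (q * m) (p * n) (q * n) r
      (by ring) (by positivity) hr,
    show (p + q) * (m + n) = p * m + q * m + p * n + q * n by ring]
  push_cast
  ring

theorem guo_zeng_corollary4 (m n p q r : ℕ) (hm : 0 < m) (hn : 0 < n)
    (hp : 0 < p) (hq : 0 < q) (hr : 0 < r) :
    (∑ a ∈ Finset.Icc 1 (p * m - r), ∑ b ∈ Finset.Icc 1 (q * n - r),
      ((Nat.choose (p * m + q * m - a + b - 1) (p * m - r - a) : ℚ) *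
        (Nat.choose (p * n + q * n + a - b - 1) (q * n - r - b) : ℚ))) +
    (∑ a ∈ Finset.Icc 1 (p * n - r), ∑ b ∈ Finset.Icc 1 (q * m - r),
      ((Nat.choose (p * n + q * n - a + b - 1) (p * n - r - a) : ℚ) *
        (Nat.choose (p * m + q * m + a - b - 1) (q * m - r - b) : ℚ))) =
    2 * (p * q * m * n : ℚ) / ((p + q) * (m + n)) *
      (Nat.choose (p * m + q * m) (p * m) : ℚ) *
      (Nat.choose (p * n + q * n) (p * n) : ℚ) -
    (r : ℚ) * (Nat.choose ((p + q) * (m + n)) (p * m + p * n) : ℚ) +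
    ∑ k ∈ Finset.Icc (1 - (r : ℤ)) ((r : ℤ) - 1),
      ((r : ℚ) - |(k : ℚ)|) * (chooseZ (p * m + q * m) ((p * m : ℤ) - k) : ℚ) *
        (chooseZ (p * n + q * n) ((q * n : ℤ) - k) : ℚ) :=
  guo_zeng_corollary4_general m n p q r hm hp hr
end

section
/- (Theorem 3) Let m and n be positive integers and let x be a rational number with \(2x+m\neq 0\). Then \(\sum_{a=1}^{m}\sum_{b=1}^{n}\binom{x+m-a+b-1}{n+b-1}\binom{x+a-b-1}{n-b}=\frac{mn}{2x+m}\binom{2x+m}{2n}\). -/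
/-!
Substituting `j = n + b - 1` in the inner sum `S(p, q) = ∑_b C(q+b-1, n+b-1) C(p-b, n-b)` and
`j = n - b` in `S(q, p)` shows that `S(p, q) + S(q, p)` is the full convolution
`∑_{i+j=2n-1} C(q-n+i, i) C(p-n+j, j)`, which upper negation turns into a Chu–Vandermonde sum
equal to `C(p+q, 2n-1)`. The reflection `a ↦ m+1-a` exchanges `p = x+a-1` and `q = x+m-a`, so
twice the double sum is `m C(2x+m-1, 2n-1)`, and absorption `2n C(y, 2n) = y C(y-1, 2n-1)`
gives the closed form.
-/

open Finset

theorem Finset.sum_Icc_one_eq_sum_range {M : Type*} [AddCommMonoid M] (f : ℕ → M) (n : ℕ) :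
    ∑ b ∈ Icc 1 n, f b = ∑ i ∈ range n, f (i + 1) := by
  rw [← Ico_add_one_right_eq_Icc, sum_Ico_eq_sum_range, Nat.add_sub_cancel]
  simp only [add_comm 1]

theorem Finset.sum_Icc_one_reflect {M : Type*} [AddCommMonoid M] (f : ℕ → M) (m : ℕ) :
    ∑ a ∈ Icc 1 m, f (m + 1 - a) = ∑ a ∈ Icc 1 m, f a := by
  rw [← Ico_add_one_right_eq_Icc, sum_Ico_reflect f 1 (Nat.le_succ (m + 1)),
    show m + 1 + 1 - (m + 1) = 1 by omega, Nat.add_sub_cancel]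

namespace Ring

variable {R : Type*} [CommRing R] [BinomialRing R]

theorem choose_add_self_eq_negOnePow_smul (r : R) (k : ℕ) :
    choose (r + k) k = Int.negOnePow k • choose (-(r + 1)) k := by
  rw [choose_neg, smul_smul, ← Int.negOnePow_add, Int.negOnePow_even _ ⟨_, rfl⟩, one_smul]
  congr 1
  ring

theorem sum_antidiagonal_choose_add_mul_choose_add (a b : R) (k : ℕ) :
    ∑ ij ∈ antidiagonal k, choose (a + ij.1) ij.1 * choose (b + ij.2) ij.2 =
      choose (a + b + 1 + k) k := by
  rw [choose_add_self_eq_negOnePow_smul, show -(a + b + 1 + 1) = -(a + 1) + -(b + 1) by ring,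
    add_choose_eq k (Commute.all _ _), smul_sum]
  refine sum_congr rfl fun ij hij => ?_
  rw [choose_add_self_eq_negOnePow_smul, choose_add_self_eq_negOnePow_smul, smul_mul_smul_comm,
    ← Int.negOnePow_add, ← Nat.cast_add, mem_antidiagonal.mp hij]

theorem succ_mul_choose_succ (r : R) (k : ℕ) :
    (k + 1) * choose r (k + 1) = r * choose (r - 1) k := by
  have h := choose_smul_choose r (Nat.le_add_left 1 k)
  rwa [Nat.choose_one_right, nsmul_eq_mul, choose_one_right, Nat.cast_one, Nat.cast_add_one,
    Nat.add_sub_cancel] at h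

theorem sum_Icc_choose_mul_choose_add_swap {n : ℕ} (hn : 0 < n) (p q : R) :
    ∑ b ∈ Icc 1 n, choose (q + b - 1) (n + b - 1) * choose (p - b) (n - b) +
      ∑ b ∈ Icc 1 n, choose (p + b - 1) (n + b - 1) * choose (q - b) (n - b) =
      choose (p + q) (2 * n - 1) := by
  have hpq : q - n + (p - n) + 1 + ((2 * n - 1 : ℕ) : R) = p + q := by
    rw [Nat.cast_sub (by omega)]
    push_cast
    ring
  have hconv := sum_antidiagonal_choose_add_mul_choose_add (q - n) (p - n) (2 * n - 1)
  rw [hpq, Nat.sum_antidiagonal_eq_sum_range_succ_mk, show (2 * n - 1).succ = n + n by omega,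
    sum_range_add, ← sum_range_reflect] at hconv
  rw [sum_Icc_one_eq_sum_range, sum_Icc_one_eq_sum_range, add_comm, ← hconv]
  congr 1 <;> refine sum_congr rfl fun i hi => ?_ <;> have hi := mem_range.mp hi
  · rw [mul_comm, show 2 * n - 1 - (n - 1 - i) = n + i by omega,
      show n + (i + 1) - 1 = n + i by omega, show n - 1 - i = n - (i + 1) by omega,
      Nat.cast_sub (by omega : i + 1 ≤ n)]
    congr 2 <;> push_cast <;> ring
  · rw [show 2 * n - 1 - (n + i) = n - (i + 1) by omega, show n + (i + 1) - 1 = n + i by omega,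
      Nat.cast_sub (by omega : i + 1 ≤ n)]
    congr 2 <;> push_cast <;> ring

theorem two_mul_sum_Icc_sum_Icc_choose_mul_choose (m : ℕ) {n : ℕ} (hn : 0 < n) (x : R) :
    2 * ∑ a ∈ Icc 1 m, ∑ b ∈ Icc 1 n,
      choose (x + m - a + b - 1) (n + b - 1) * choose (x + a - b - 1) (n - b) =
      m * choose (2 * x + m - 1) (2 * n - 1) := by
  rw [two_mul]
  nth_rw 2 [← sum_Icc_one_reflect]
  rw [← sum_add_distrib, sum_eq_card_nsmul (b := choose (2 * x + m - 1) (2 * n - 1)),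
    Nat.card_Icc, Nat.add_sub_cancel, nsmul_eq_mul]
  intro a ha
  rw [Nat.cast_sub ((mem_Icc.mp ha).2.trans (Nat.le_succ m)),
    show 2 * x + m - 1 = (x + a - 1) + (x + m - a) by ring,
    ← sum_Icc_choose_mul_choose_add_swap hn]
  congr 1 <;> refine sum_congr rfl fun b _ => ?_ <;> congr 2 <;> push_cast <;> ring

end Ring

theorem guo_zeng_theorem3_general (m n : ℕ) (hn : 0 < n) (x : ℚ)
    (hx : 2 * x + m ≠ 0) :
    ∑ a ∈ Finset.Icc 1 m, ∑ b ∈ Finset.Icc 1 n,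
      qbinom (x + m - a + b - 1) (n + b - 1) * qbinom (x + a - b - 1) (n - b) =
    (m * n : ℚ) / (2 * x + m) * qbinom (2 * x + m) (2 * n) := by
  simp only [qbinom_eq_choose]
  have hsum := Ring.two_mul_sum_Icc_sum_Icc_choose_mul_choose m hn x
  have habsorb := Ring.succ_mul_choose_succ (2 * x + m) (2 * n - 1)
  rw [Nat.sub_add_cancel (by omega), Nat.cast_sub (by omega)] at habsorb
  push_cast at habsorb
  rw [div_mul_eq_mul_div, eq_div_iff hx]
  linear_combination (2 * x + m) / 2 * hsum - m / 2 * habsorb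

theorem guo_zeng_theorem3 (m n : ℕ) (hm : 0 < m) (hn : 0 < n) (x : ℚ)
    (hx : 2 * x + m ≠ 0) :
    ∑ a ∈ Finset.Icc 1 m, ∑ b ∈ Finset.Icc 1 n,
      qbinom (x + m - a + b - 1) (n + b - 1) * qbinom (x + a - b - 1) (n - b) =
    (m * n : ℚ) / (2 * x + m) * qbinom (2 * x + m) (2 * n) :=
  guo_zeng_theorem3_general m n hn x hx
end
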